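/- arXiv:math/0612761 — 5 statements merged into one kernel-verified Lean document; each statement's English description precedes it below -/
import Mathlib

section
/- Let S = {1,…,N} with its standard order and (C, Γ1, Γ2) an associative BD-structure on S with α0 = (N,1) ∉ Γ2. Set Γ1' = Γ1 ∖ {α0} and Γ2' = (C×C)(Γ1'). Then (C, Γ1', Γ2') is again an associative BD-structure on S with α0 ∉ Γ2', and the function r'(x; y, y') attached to (C, Γ1', Γ2') by the standard formula satisfies r'(x; y, y') = a(x) + (y/(y'−y))·P for all admissible x, y, y', where a(x) = (1−x^N)^{-1} Σ_{i∈S} Σ_{k=0}^{N−1} x^k e_{ii}⊗e_{C^k(i),C^k(i)} + Σ_{α>0} e_α⊗e_{−α} + Σ_{k≥1, α∈P(k), α>0} [x^k e_α⊗e_{−τ^k(α)} − x^{−k} e_{−τ^k(α)}⊗e_α] is computed from the original structure (C, Γ1, Γ2), and P = Σ_{i,j} e_{ij}⊗e_{ji}. -/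
open scoped TensorProduct
noncomputable section

/-- The algebra of `S × S` complex matrices. -/
abbrev Mat (S : Type) := Matrix S S ℂ
/-- `A ⊗ A`. -/
abbrev TT (S : Type) := Mat S ⊗[ℂ] Mat S
/-- `A ⊗ A ⊗ A`. -/
abbrev TTT (S : Type) := Mat S ⊗[ℂ] (Mat S ⊗[ℂ] Mat S)

variable (S : Type) [Fintype S] [DecidableEq S]

/-- Matrix units `e_{ij}`. -/
def E (i j : S) : Mat S := Matrix.single i j 1

/-- `x^{12}`: `a ⊗ b ↦ a ⊗ b ⊗ 1`. -/
def leg12 : TT S →ₐ[ℂ] TTT S :=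
  Algebra.TensorProduct.map (AlgHom.id ℂ (Mat S))
    (Algebra.TensorProduct.includeLeft (R := ℂ) (A := Mat S) (B := Mat S))

/-- `x^{13}`: `a ⊗ b ↦ a ⊗ 1 ⊗ b`. -/
def leg13 : TT S →ₐ[ℂ] TTT S :=
  Algebra.TensorProduct.map (AlgHom.id ℂ (Mat S))
    (Algebra.TensorProduct.includeRight (R := ℂ) (A := Mat S) (B := Mat S))

/-- `x^{23}`: `a ⊗ b ↦ 1 ⊗ a ⊗ b`. -/
def leg23 : TT S →ₐ[ℂ] TTT S :=
  Algebra.TensorProduct.includeRight (R := ℂ) (A := Mat S) (B := TT S)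

/-- `x^{21}`: `a ⊗ b ↦ b ⊗ a`. -/
def flip21 : TT S →ₐ[ℂ] TT S :=
  (Algebra.TensorProduct.comm ℂ (Mat S) (Mat S)).toAlgHom

/-- Membership in `P_ι` (for `Γ = Γ_ι ⊆ Γ_{C0}`). -/
def inP (C0 : Equiv.Perm S) (Γ : Set (S × S)) (p : S × S) : Prop :=
  ∃ m : ℕ, 1 ≤ m ∧ p.2 = (C0 ^ m) p.1 ∧
    ∀ j : ℕ, j < m → ((C0 ^ j) p.1, (C0 ^ (j + 1)) p.1) ∈ Γ

/-- `τ^k` is defined at `p`, i.e. `p ∈ P(k)`. -/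
def tauDef (C0 C : Equiv.Perm S) (Γ1 : Set (S × S)) (k : ℕ) (p : S × S) : Prop :=
  ∀ l : ℕ, l < k → inP S C0 Γ1 ((C ^ l) p.1, (C ^ l) p.2)

variable (N : ℕ) [NeZero N]

/-- The successor cyclic permutation `C0` of `Fin N` (i.e. of `S = {1,…,N}` in its
standard cyclic order). -/
def C0std : Equiv.Perm (Fin N) := Equiv.addRight (1 : Fin N)

/-- `α0 = (N, 1)`, i.e. `(max, min)` of `Fin N`. -/
def alpha0 : Fin N × Fin N := ((0 - 1 : Fin N), (0 : Fin N))

/-- The constant part `r_const(x, z)`. -/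
def rConst (C : Equiv.Perm (Fin N)) (x z : ℂ) : TT (Fin N) :=
  (z * (1 - z)⁻¹) • ∑ p ∈ Finset.univ.filter (fun p : Fin N × Fin N => p.1 < p.2),
      E (Fin N) p.2 p.1 ⊗ₜ[ℂ] E (Fin N) p.1 p.2
  + (1 - z)⁻¹ • ∑ p ∈ Finset.univ.filter (fun p : Fin N × Fin N => p.1 < p.2),
      E (Fin N) p.1 p.2 ⊗ₜ[ℂ] E (Fin N) p.2 p.1
  + (z * (1 - z)⁻¹) • ∑ i : Fin N, E (Fin N) i i ⊗ₜ[ℂ] E (Fin N) i i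
  + (1 - x ^ N)⁻¹ • ∑ i : Fin N, ∑ k ∈ Finset.range N,
      x ^ k • (E (Fin N) i i ⊗ₜ[ℂ] E (Fin N) ((C ^ k) i) ((C ^ k) i))

open Classical in
/-- The `r`-matrix `r(x; y, y')` in multiplicative variables (note that `P(k) = ∅` for
`k ≥ N`, so summing `k` over `[1, N]` is the same as summing over all `k ≥ 1`). -/
def rX (C : Equiv.Perm (Fin N)) (Γ1 : Set (Fin N × Fin N)) (x y y' : ℂ) : TT (Fin N) :=
  rConst N C x (y / y')
  + ∑ k ∈ Finset.Icc 1 N, ∑ p : Fin N × Fin N,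
      if tauDef (Fin N) (C0std N) C Γ1 k p ∧ p.1 < p.2 then
        x ^ k • (E (Fin N) p.1 p.2 ⊗ₜ[ℂ] E (Fin N) ((C ^ k) p.2) ((C ^ k) p.1))
          - x⁻¹ ^ k • (E (Fin N) ((C ^ k) p.2) ((C ^ k) p.1) ⊗ₜ[ℂ] E (Fin N) p.1 p.2)
      else 0
  + ∑ k ∈ Finset.Icc 1 N, ∑ p : Fin N × Fin N,
      if tauDef (Fin N) (C0std N) C Γ1 k p ∧ p.2 < p.1 then
        (y * x ^ k) • (E (Fin N) p.1 p.2 ⊗ₜ[ℂ] E (Fin N) ((C ^ k) p.2) ((C ^ k) p.1))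
          - (y' * x⁻¹ ^ k) • (E (Fin N) ((C ^ k) p.2) ((C ^ k) p.1) ⊗ₜ[ℂ] E (Fin N) p.1 p.2)
      else 0
/-- The permutation tensor `P = Σ_{i,j} e_{ij} ⊗ e_{ji}`. -/
def Ptensor : TT (Fin N) :=
  ∑ p : Fin N × Fin N, E (Fin N) p.1 p.2 ⊗ₜ[ℂ] E (Fin N) p.2 p.1

open Classical in
/-- The function `a(x)` computed from the structure `(C, Γ1, Γ2)`. -/
def aFun (C : Equiv.Perm (Fin N)) (Γ1 : Set (Fin N × Fin N)) (x : ℂ) : TT (Fin N) :=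
  (1 - x ^ N)⁻¹ • ∑ i : Fin N, ∑ k ∈ Finset.range N,
      x ^ k • (E (Fin N) i i ⊗ₜ[ℂ] E (Fin N) ((C ^ k) i) ((C ^ k) i))
  + ∑ p ∈ Finset.univ.filter (fun p : Fin N × Fin N => p.1 < p.2),
      E (Fin N) p.1 p.2 ⊗ₜ[ℂ] E (Fin N) p.2 p.1
  + ∑ k ∈ Finset.Icc 1 N, ∑ p : Fin N × Fin N,
      if tauDef (Fin N) (C0std N) C Γ1 k p ∧ p.1 < p.2 then
        x ^ k • (E (Fin N) p.1 p.2 ⊗ₜ[ℂ] E (Fin N) ((C ^ k) p.2) ((C ^ k) p.1))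
          - x⁻¹ ^ k • (E (Fin N) ((C ^ k) p.2) ((C ^ k) p.1) ⊗ₜ[ℂ] E (Fin N) p.1 p.2)
      else 0


/-!
A chain of `Γ`-steps `i → i+1 → ⋯ → j` avoids `α0 = (N, 1)` exactly when it does not wrap
around, i.e. when `i < j`. So after removing `α0` from `Γ1` the negative roots drop out of
`P_1'`. For a positive root `α ∈ P(k)` nothing changes: `α` itself does not wrap around, and for
`l ≥ 1` the root `τ^l(α)` lies in `P_1` and in `P_2`; chains of length `< N` are determined by
their endpoints, so its `Γ1`-chain is its `Γ2`-chain, which misses `α0 ∉ Γ2`. Hence the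
`τ`-terms of `r'` are the positive `τ`-terms of the original structure, while
`r_const(x, z) = r_const(x, 0) + z (1 - z)⁻¹ P` with `z (1 - z)⁻¹ = y / (y' - y)` for `z = y / y'`.
-/

section Chains

variable {S : Type} {C0 : Equiv.Perm S}

theorem inP_mono {Γ Γ' : Set (S × S)} (h : Γ ⊆ Γ') {p : S × S} (hp : inP S C0 Γ p) :
    inP S C0 Γ' p :=
  let ⟨m, hm, hp2, hsteps⟩ := hp
  ⟨m, hm, hp2, fun j hj => h (hsteps j hj)⟩

theorem tauDef_mono {C : Equiv.Perm S} {Γ Γ' : Set (S × S)} (h : Γ ⊆ Γ') {k : ℕ} {p : S × S}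
    (hp : tauDef S C0 C Γ k p) : tauDef S C0 C Γ' k p :=
  fun l hl => inP_mono h (hp l hl)

/-- Along the chain `C` commutes with `C0`, since each step is sent into `Γ2 ⊆ Γ_{C0}`. -/
theorem inP_image {C : Equiv.Perm S} {Γ1 Γ2 : Set (S × S)}
    (hmaps : ∀ q ∈ Γ1, (C q.1, C q.2) ∈ Γ2) (hΓ2 : Γ2 ⊆ {q : S × S | q.2 = C0 q.1})
    {p : S × S} (hp : inP S C0 Γ1 p) : inP S C0 Γ2 (C p.1, C p.2) := by
  obtain ⟨m, hm, hp2, hsteps⟩ := hp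
  have hcomm : ∀ j ≤ m, C ((C0 ^ j) p.1) = (C0 ^ j) (C p.1) := by
    intro j hj
    induction j with
    | zero => rfl
    | succ j ih =>
      have hstep : C ((C0 ^ (j + 1)) p.1) = C0 (C ((C0 ^ j) p.1)) := hΓ2 (hmaps _ (hsteps j hj))
      rw [hstep, ih (by omega), pow_succ', Equiv.Perm.mul_apply]
  refine ⟨m, hm, by rw [hp2, hcomm m le_rfl], fun j hj => ?_⟩
  rw [← hcomm j hj.le, ← hcomm (j + 1) hj]
  exact hmaps _ (hsteps j hj)

end Chains

section CyclicOrder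

open Fin.NatCast Fin.CommRing

variable {N : ℕ} [NeZero N]

theorem C0std_pow_apply (j : ℕ) (s : Fin N) : (C0std N ^ j) s = s + (j : Fin N) := by
  induction j with
  | zero => simp
  | succ j ih =>
    rw [pow_succ', Equiv.Perm.mul_apply, ih]
    simp only [C0std, Equiv.coe_addRight]
    push_cast
    ring

theorem val_C0std_pow_apply (j : ℕ) (s : Fin N) :
    ((C0std N ^ j) s).val = (s.val + j) % N := by
  rw [C0std_pow_apply, Fin.val_add, Fin.val_natCast, Nat.add_mod_mod]

theorem step_eq_alpha0_iff (j : ℕ) (s : Fin N) :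
    ((C0std N ^ j) s, (C0std N ^ (j + 1)) s) = alpha0 N ↔ (s.val + (j + 1)) % N = 0 := by
  rw [← val_C0std_pow_apply, ← Fin.val_zero N, ← Fin.ext_iff, alpha0, Prod.ext_iff]
  refine ⟨And.right, fun h => ⟨?_, h⟩⟩
  rw [pow_succ', Equiv.Perm.mul_apply, C0std, Equiv.coe_addRight] at h
  exact eq_sub_of_add_eq h

/-- A proper subset of `Γ_{C0}` misses a step of the cycle, and a chain of length `≥ N` passes
through every step. -/
theorem chain_length_lt {Γ : Set (Fin N × Fin N)}
    (hΓ : Γ ⊂ {p : Fin N × Fin N | p.2 = C0std N p.1}) {s : Fin N} {m : ℕ}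
    (hsteps : ∀ j < m, ((C0std N ^ j) s, (C0std N ^ (j + 1)) s) ∈ Γ) : m < N := by
  by_contra! hm
  obtain ⟨q, hq, hqΓ⟩ := Set.exists_of_ssubset hΓ
  have hj : (C0std N ^ (q.1 - s).val) s = q.1 := by
    rw [C0std_pow_apply, Fin.cast_val_eq_self]; ring
  have hstep := hsteps _ (((q.1 - s).isLt).trans_le hm)
  rw [pow_succ', Equiv.Perm.mul_apply, hj, ← hq] at hstep
  exact hqΓ hstep

/-- Two chains from `p.1` to `p.2` of length `< N` have the same length, hence the same steps. -/
theorem inP_inter {Γ Γ' : Set (Fin N × Fin N)}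
    (hΓ : Γ ⊂ {p : Fin N × Fin N | p.2 = C0std N p.1})
    (hΓ' : Γ' ⊂ {p : Fin N × Fin N | p.2 = C0std N p.1}) {p : Fin N × Fin N}
    (hp : inP (Fin N) (C0std N) Γ p) (hp' : inP (Fin N) (C0std N) Γ' p) :
    inP (Fin N) (C0std N) (Γ ∩ Γ') p := by
  obtain ⟨m, hm, hp2, hsteps⟩ := hp
  obtain ⟨m', -, hp2', hsteps'⟩ := hp'
  have hmm' : m = m' := by
    have h := hp2.symm.trans hp2'
    rw [C0std_pow_apply, C0std_pow_apply, add_right_inj] at h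
    simpa [Fin.val_natCast, Nat.mod_eq_of_lt (chain_length_lt hΓ hsteps),
      Nat.mod_eq_of_lt (chain_length_lt hΓ' hsteps')] using congrArg Fin.val h
  subst hmm'
  exact ⟨m, hm, hp2, fun j hj => ⟨hsteps j hj, hsteps' j hj⟩⟩

/-- A chain avoiding `α0` never wraps around from `N` to `1`. -/
theorem inP.fst_lt_snd {Γ : Set (Fin N × Fin N)} (hα0 : alpha0 N ∉ Γ) {p : Fin N × Fin N}
    (hp : inP (Fin N) (C0std N) Γ p) : p.1 < p.2 := by
  obtain ⟨m, hm, hp2, hsteps⟩ := hp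
  have hp1 := p.1.isLt
  have hnowrap : p.1.val + m < N := by
    by_contra! hwrap
    have hα : ((C0std N ^ (N - 1 - p.1.val)) p.1, (C0std N ^ (N - 1 - p.1.val + 1)) p.1)
        = alpha0 N := by
      rw [step_eq_alpha0_iff, show p.1.val + (N - 1 - p.1.val + 1) = N by omega, Nat.mod_self]
    exact hα0 (hα ▸ hsteps _ (by omega))
  rw [Fin.lt_def, hp2, val_C0std_pow_apply, Nat.mod_eq_of_lt hnowrap]
  omega

theorem inP_diff_alpha0 {Γ : Set (Fin N × Fin N)}
    (hΓ : Γ ⊂ {p : Fin N × Fin N | p.2 = C0std N p.1}) {p : Fin N × Fin N}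
    (hp : inP (Fin N) (C0std N) Γ p) (hlt : p.1 < p.2) :
    inP (Fin N) (C0std N) (Γ \ {alpha0 N}) p := by
  obtain ⟨m, hm, hp2, hsteps⟩ := hp
  have hmN := chain_length_lt hΓ hsteps
  have hp1 := p.1.isLt
  have hnowrap : p.1.val + m < N := by
    by_contra! hwrap
    rw [Fin.lt_def, hp2, val_C0std_pow_apply, Nat.mod_eq_sub_mod hwrap,
      Nat.mod_eq_of_lt (by omega)] at hlt
    omega
  refine ⟨m, hm, hp2, fun j hj => ⟨hsteps j hj, fun hα => ?_⟩⟩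
  rw [Set.mem_singleton_iff, step_eq_alpha0_iff, Nat.mod_eq_of_lt (by omega)] at hα
  omega

end CyclicOrder

section Tau

variable {N : ℕ} [NeZero N] {C : Equiv.Perm (Fin N)}

theorem tauDef_fst_lt_snd {Γ : Set (Fin N × Fin N)} (hα0 : alpha0 N ∉ Γ) {k : ℕ} (hk : 1 ≤ k)
    {p : Fin N × Fin N} (hp : tauDef (Fin N) (C0std N) C Γ k p) : p.1 < p.2 := by
  simpa using (hp 0 hk).fst_lt_snd hα0

/-- For `l ≥ 1`, `τ^l(α)` lies in `P_1` and, as the image of `τ^{l-1}(α)`, in `P_2`; its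
chain is therefore contained in `Γ1 ∩ Γ2`, which misses `α0`. -/
theorem tauDef_diff_alpha0_iff {Γ1 Γ2 : Set (Fin N × Fin N)}
    (hΓ1 : Γ1 ⊂ {p : Fin N × Fin N | p.2 = C0std N p.1})
    (hΓ2 : Γ2 ⊂ {p : Fin N × Fin N | p.2 = C0std N p.1})
    (hmaps : ∀ q ∈ Γ1, (C q.1, C q.2) ∈ Γ2) (hα0 : alpha0 N ∉ Γ2) {k : ℕ}
    {p : Fin N × Fin N} (hlt : p.1 < p.2) :
    tauDef (Fin N) (C0std N) C (Γ1 \ {alpha0 N}) k p ↔ tauDef (Fin N) (C0std N) C Γ1 k p := by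
  refine ⟨tauDef_mono Set.sdiff_subset, fun hp l hl => ?_⟩
  cases l with
  | zero => simpa using inP_diff_alpha0 hΓ1 (by simpa using hp 0 hl) hlt
  | succ l =>
    have hmem := hp (l + 1) hl
    have himage := inP_image hmaps hΓ2.subset (hp l (by omega))
    simp only [pow_succ', Equiv.Perm.mul_apply] at hmem ⊢
    have hinter : Γ1 ∩ Γ2 ⊆ Γ1 \ {alpha0 N} := fun q hq =>
      ⟨hq.1, fun hqα => hα0 (Set.mem_singleton_iff.mp hqα ▸ hq.2)⟩
    exact inP_mono hinter (inP_inter hΓ1 hΓ2 hmem himage)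

end Tau

theorem Fintype.sum_prod_eq_sum_lt_add_sum_lt_swap_add_sum_diag {α M : Type*} [Fintype α]
    [LinearOrder α] [AddCommMonoid M] (f : α × α → M) :
    ∑ p, f p = ∑ p ∈ Finset.univ.filter (fun p : α × α => p.1 < p.2), f p
      + ∑ p ∈ Finset.univ.filter (fun p : α × α => p.1 < p.2), f p.swap + ∑ i, f (i, i) := by
  have hsplit : ∀ p : α × α, f p = ((if p.1 < p.2 then f p else 0)
      + if p.2 < p.1 then f p else 0) + if p.1 = p.2 then f p else 0 := by
    intro p
    rcases lt_trichotomy p.1 p.2 with h | h | h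
    · simp [h, h.not_gt, h.ne]
    · simp [h]
    · simp [h, h.not_gt, h.ne']
  have hgt : ∑ p ∈ Finset.univ.filter (fun p : α × α => p.1 < p.2), f p.swap
      = ∑ p, if p.2 < p.1 then f p else 0 := by
    rw [← Finset.sum_filter]
    exact Finset.sum_equiv (Equiv.prodComm α α) (by simp) (by simp)
  have hdiag : ∑ i, f (i, i) = ∑ p : α × α, if p.1 = p.2 then f p else 0 := by
    simp [Fintype.sum_prod_type]
  rw [hgt, hdiag, Finset.sum_filter, ← Finset.sum_add_distrib, ← Finset.sum_add_distrib]
  exact Finset.sum_congr rfl fun p _ => hsplit p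

theorem rConst_eq_rConst_zero_add {N : ℕ} (C : Equiv.Perm (Fin N)) (x : ℂ) {z : ℂ} (hz : z ≠ 1) :
    rConst N C x z = rConst N C x 0 + (z * (1 - z)⁻¹) • Ptensor N := by
  have hinv : (1 - z)⁻¹ = 1 + z * (1 - z)⁻¹ := by
    field_simp [sub_ne_zero.mpr hz.symm]
    ring
  rw [rConst, rConst, Ptensor, Fintype.sum_prod_eq_sum_lt_add_sum_lt_swap_add_sum_diag]
  -- naming `z (1 - z)⁻¹` keeps `rw [hinv]` from rewriting inside it
  set w := z * (1 - z)⁻¹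
  rw [hinv]
  simp only [zero_mul, zero_smul, sub_zero, inv_one, one_smul, zero_add, Prod.fst_swap,
    Prod.snd_swap, add_smul, smul_add]
  abel

section RootSums

variable {N : ℕ} [NeZero N]

open Classical in
/-- `Σ_{k ≥ 1, α ∈ P(k), R α} [a_k e_α ⊗ e_{-τ^k α} - b_k e_{-τ^k α} ⊗ e_α]`. -/
def rootSum (C : Equiv.Perm (Fin N)) (Γ : Set (Fin N × Fin N)) (R : Fin N → Fin N → Prop)
    [DecidableRel R] (a b : ℕ → ℂ) : TT (Fin N) :=
  ∑ k ∈ Finset.Icc 1 N, ∑ p : Fin N × Fin N,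
    if tauDef (Fin N) (C0std N) C Γ k p ∧ R p.1 p.2 then
      a k • (E (Fin N) p.1 p.2 ⊗ₜ[ℂ] E (Fin N) ((C ^ k) p.2) ((C ^ k) p.1))
        - b k • (E (Fin N) ((C ^ k) p.2) ((C ^ k) p.1) ⊗ₜ[ℂ] E (Fin N) p.1 p.2)
    else 0

variable {C : Equiv.Perm (Fin N)} {R : Fin N → Fin N → Prop} [DecidableRel R] {a b : ℕ → ℂ}

open Classical in
theorem rootSum_congr {Γ Γ' : Set (Fin N × Fin N)}
    (h : ∀ k ∈ Finset.Icc 1 N, ∀ p : Fin N × Fin N, R p.1 p.2 →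
      (tauDef (Fin N) (C0std N) C Γ k p ↔ tauDef (Fin N) (C0std N) C Γ' k p)) :
    rootSum C Γ R a b = rootSum C Γ' R a b :=
  Finset.sum_congr rfl fun k hk => Finset.sum_congr rfl fun p _ =>
    if_congr (and_congr_left (h k hk p)) rfl rfl

open Classical in
theorem rootSum_eq_zero {Γ : Set (Fin N × Fin N)}
    (h : ∀ k ∈ Finset.Icc 1 N, ∀ p : Fin N × Fin N,
      tauDef (Fin N) (C0std N) C Γ k p → ¬ R p.1 p.2) :
    rootSum C Γ R a b = 0 :=
  Finset.sum_eq_zero fun k hk => Finset.sum_eq_zero fun p _ =>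
    if_neg fun hp => h k hk p hp.1 hp.2

/-- In `rX` the `if` of the positive-root sum extends to the end of the definition, so the
negative-root sum sits in its `else` branch; it is harmless once it vanishes. -/
theorem rX_eq_rConst_add_rootSum {Γ : Set (Fin N × Fin N)} {x y y' : ℂ}
    (h : rootSum C Γ (fun i j => j < i) (fun k => y * x ^ k) (fun k => y' * x⁻¹ ^ k) = 0) :
    rX N C Γ x y y' = rConst N C x (y / y') + rootSum C Γ (· < ·) (x ^ ·) (x⁻¹ ^ ·) := by
  simp only [rootSum] at h
  simp only [rX, h, add_zero]
  rfl

theorem aFun_eq_rConst_zero_add_rootSum (Γ : Set (Fin N × Fin N)) (x : ℂ) :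
    aFun N C Γ x = rConst N C x 0 + rootSum C Γ (· < ·) (x ^ ·) (x⁻¹ ^ ·) := by
  simp only [aFun, rConst, rootSum, zero_mul, zero_smul, sub_zero, inv_one, one_smul, zero_add]
  abel

end RootSums

theorem stmt4_general (N : ℕ) [NeZero N]
    (C : Equiv.Perm (Fin N))
    (Γ1 Γ2 : Set (Fin N × Fin N))
    (hΓ1 : Γ1 ⊂ {p : Fin N × Fin N | p.2 = C0std N p.1})
    (hΓ2 : Γ2 ⊂ {p : Fin N × Fin N | p.2 = C0std N p.1})
    (hmap : (fun p : Fin N × Fin N => (C p.1, C p.2)) '' Γ1 = Γ2)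
    (hα0 : alpha0 N ∉ Γ2) :
    Γ1 \ {alpha0 N} ⊂ {p : Fin N × Fin N | p.2 = C0std N p.1}
    ∧ (fun p : Fin N × Fin N => (C p.1, C p.2)) '' (Γ1 \ {alpha0 N})
        ⊂ {p : Fin N × Fin N | p.2 = C0std N p.1}
    ∧ alpha0 N ∉ (fun p : Fin N × Fin N => (C p.1, C p.2)) '' (Γ1 \ {alpha0 N})
    ∧ (∀ x y y' : ℂ, x ≠ 0 → x ^ N ≠ 1 → y ≠ 0 → y' ≠ 0 → y ≠ y' →
        rX N C (Γ1 \ {alpha0 N}) x y y'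
          = aFun N C Γ1 x + (y / (y' - y)) • Ptensor N) := by
  have hmaps : ∀ q ∈ Γ1, (C q.1, C q.2) ∈ Γ2 := fun q hq => hmap ▸ Set.mem_image_of_mem _ hq
  have himage : (fun p : Fin N × Fin N => (C p.1, C p.2)) '' (Γ1 \ {alpha0 N}) ⊆ Γ2 :=
    hmap ▸ Set.image_mono Set.sdiff_subset
  refine ⟨Set.sdiff_subset.trans_ssubset hΓ1, himage.trans_ssubset hΓ2,
    fun h => hα0 (himage h), fun x y y' _ _ _ hy' hne => ?_⟩
  have hα0' : alpha0 N ∉ Γ1 \ {alpha0 N} := fun h => h.2 rfl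
  have hneg : rootSum C (Γ1 \ {alpha0 N}) (fun i j => j < i) (fun k => y * x ^ k)
      (fun k => y' * x⁻¹ ^ k) = 0 :=
    rootSum_eq_zero fun k hk p hp => (tauDef_fst_lt_snd hα0' (Finset.mem_Icc.1 hk).1 hp).asymm
  have hpos : rootSum C (Γ1 \ {alpha0 N}) (· < ·) (x ^ ·) (x⁻¹ ^ ·)
      = rootSum C Γ1 (· < ·) (x ^ ·) (x⁻¹ ^ ·) :=
    rootSum_congr fun k _ p hp => tauDef_diff_alpha0_iff hΓ1 hΓ2 hmaps hα0 hp
  have hz : y / y' ≠ 1 := by rwa [Ne, div_eq_one_iff_eq hy']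
  have hcoeff : y / y' * (1 - y / y')⁻¹ = y / (y' - y) := by
    field_simp [sub_ne_zero.mpr hne.symm]
  rw [rX_eq_rConst_add_rootSum hneg, hpos, rConst_eq_rConst_zero_add C x hz, hcoeff,
    aFun_eq_rConst_zero_add_rootSum]
  abel

/-- Lemma `Sch-lem`: removing `α0` from `Γ1` yields again an associative
BD-structure with `α0 ∉ Γ2'`, whose `r`-matrix equals `a(x) + (y/(y'-y))·P`, where `a(x)`
is computed from the original structure. -/
theorem stmt4 (N : ℕ) [NeZero N]
    (C : Equiv.Perm (Fin N))
    (hC : ∀ s t : Fin N, ∃ k : ℕ, (C ^ k) s = t)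
    (Γ1 Γ2 : Set (Fin N × Fin N))
    (hΓ1 : Γ1 ⊂ {p : Fin N × Fin N | p.2 = C0std N p.1})
    (hΓ2 : Γ2 ⊂ {p : Fin N × Fin N | p.2 = C0std N p.1})
    (hmap : (fun p : Fin N × Fin N => (C p.1, C p.2)) '' Γ1 = Γ2)
    (hα0 : alpha0 N ∉ Γ2) :
    Γ1 \ {alpha0 N} ⊂ {p : Fin N × Fin N | p.2 = C0std N p.1}
    ∧ (fun p : Fin N × Fin N => (C p.1, C p.2)) '' (Γ1 \ {alpha0 N})
        ⊂ {p : Fin N × Fin N | p.2 = C0std N p.1}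
    ∧ alpha0 N ∉ (fun p : Fin N × Fin N => (C p.1, C p.2)) '' (Γ1 \ {alpha0 N})
    ∧ (∀ x y y' : ℂ, x ≠ 0 → x ^ N ≠ 1 → y ≠ 0 → y' ≠ 0 → y ≠ y' →
        rX N C (Γ1 \ {alpha0 N}) x y y'
          = aFun N C Γ1 x + (y / (y' - y)) • Ptensor N) :=
  stmt4_general N C Γ1 Γ2 hΓ1 hΓ2 hmap hα0
end
end

section
/- Let r : ℂ × ℂ → A⊗A satisfy the associative Yang–Baxter equation r^{12}(−u',v)·r^{13}(u+u',v+v') − r^{23}(u+u',v')·r^{12}(u,v) + r^{13}(u,v+v')·r^{23}(u',v') = 0 and the unitarity condition r^{21}(−u,−v) = −r(u,v) for all u, u', v, v' ∈ ℂ. Set s(u,v) = r(u,v)·r(−u,v) ∈ A⊗A. Then for all u1, u2, u3, v1, v2, v3 ∈ ℂ, writing u_{ij} = u_i − u_j and v_{ij} = v_i − v_j, the following three expressions are equal: (I) r^{12}(u_{12},v_{12})·r^{13}(u_{23},v_{13})·r^{23}(u_{12},v_{23}) − r^{23}(u_{23},v_{23})·r^{13}(u_{12},v_{13})·r^{12}(u_{23},v_{12});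 (II) s^{23}(u_{23},v_{23})·r^{13}(u_{13},v_{13}) − r^{13}(u_{13},v_{13})·s^{23}(u_{21},v_{23}); (III) r^{13}(u_{13},v_{13})·s^{12}(u_{32},v_{12}) − s^{12}(u_{12},v_{12})·r^{13}(u_{13},v_{13}). -/
open scoped TensorProduct
set_option maxHeartbeats 1000000
noncomputable section

variable (S : Type) [Fintype S] [DecidableEq S]

/-!
Read at three points `(uᵢ, vᵢ)`, the AYBE rewrites a product `r¹² r¹³` or `r¹³ r²³` as a
difference of two products of the other legs. Conjugating by the exchange of the first and third
tensor factors and using unitarity gives a dual three-point relation for `r²³ r¹³` and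
`r¹² r²³`. Rewriting the first triple product of (I) with one relation of each kind produces the
second triple product, and what is left are products of `r` with itself in one leg, which are the
values of `s`: this is (II). Rewriting instead the other adjacent pair in each triple product
gives (III).
-/

section AYBE

variable {R A : Type*} [CommRing R] [Ring A] [Algebra R A]

def tensorLeg12 : A ⊗[R] A →ₐ[R] A ⊗[R] (A ⊗[R] A) :=
  Algebra.TensorProduct.map (AlgHom.id R A) Algebra.TensorProduct.includeLeft

def tensorLeg13 : A ⊗[R] A →ₐ[R] A ⊗[R] (A ⊗[R] A) :=
  Algebra.TensorProduct.map (AlgHom.id R A) Algebra.TensorProduct.includeRight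

def tensorLeg23 : A ⊗[R] A →ₐ[R] A ⊗[R] (A ⊗[R] A) :=
  Algebra.TensorProduct.includeRight

/-- `a ⊗ b ⊗ c ↦ c ⊗ b ⊗ a`. -/
def tensorSwap13 : A ⊗[R] (A ⊗[R] A) →ₐ[R] A ⊗[R] (A ⊗[R] A) :=
  (Algebra.TensorProduct.assoc R R R A A A).toAlgHom.comp
    ((Algebra.TensorProduct.comm R A (A ⊗[R] A)).toAlgHom.comp
      (Algebra.TensorProduct.map (AlgHom.id R A) (Algebra.TensorProduct.comm R A A).toAlgHom))

theorem tensorSwap13_tensorLeg12 (x : A ⊗[R] A) :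
    tensorSwap13 (tensorLeg12 x) = tensorLeg23 (Algebra.TensorProduct.comm R A A x) := by
  induction x using TensorProduct.induction_on with
  | zero => simp
  | tmul a b => simp [tensorSwap13, tensorLeg12, tensorLeg23]
  | add x y hx hy => simp only [map_add, hx, hy]

theorem tensorSwap13_tensorLeg13 (x : A ⊗[R] A) :
    tensorSwap13 (tensorLeg13 x) = tensorLeg13 (Algebra.TensorProduct.comm R A A x) := by
  induction x using TensorProduct.induction_on with
  | zero => simp
  | tmul a b => simp [tensorSwap13, tensorLeg13]
  | add x y hx hy => simp only [map_add, hx, hy]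

theorem tensorSwap13_tensorLeg23 (x : A ⊗[R] A) :
    tensorSwap13 (tensorLeg23 x) = tensorLeg12 (Algebra.TensorProduct.comm R A A x) := by
  induction x using TensorProduct.induction_on with
  | zero => simp
  | tmul a b => simp [tensorSwap13, tensorLeg12, tensorLeg23]
  | add x y hx hy => simp only [map_add, hx, hy]

/- `simp` cannot use `neg_mul_neg` in `A ⊗ (A ⊗ A)`: the negation produced by `map_neg` is not
reducibly the one of the ring structure. -/
theorem map_neg_mul_map_neg {F F' B C : Type*} [Ring B] [Ring C] [FunLike F B C]
    [RingHomClass F B C] [FunLike F' B C] [RingHomClass F' B C] (f : F) (g : F') (x y : B) :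
    f (-x) * g (-y) = f x * g y := by
  rw [map_neg, map_neg, neg_mul_neg]

variable {G : Type*} [AddCommGroup G]

def IsAYBESolution (r : G → G → A ⊗[R] A) : Prop :=
  ∀ u u' v v' : G,
    tensorLeg12 (r (-u') v) * tensorLeg13 (r (u + u') (v + v'))
      - tensorLeg23 (r (u + u') v') * tensorLeg12 (r u v)
      + tensorLeg13 (r u (v + v')) * tensorLeg23 (r u' v') = 0

def IsUnitaryRMatrix (r : G → G → A ⊗[R] A) : Prop :=
  ∀ u v : G, Algebra.TensorProduct.comm R A A (r (-u) (-v)) = -r u v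

variable {r : G → G → A ⊗[R] A}

theorem IsUnitaryRMatrix.comm_apply (hu : IsUnitaryRMatrix r) (u v : G) :
    Algebra.TensorProduct.comm R A A (r u v) = -r (-u) (-v) := by
  simpa using hu (-u) (-v)

theorem IsAYBESolution.three_point (hr : IsAYBESolution r) (u1 u2 u3 v1 v2 v3 : G) :
    tensorLeg12 (r (u1 - u2) (v1 - v2)) * tensorLeg13 (r (u2 - u3) (v1 - v3))
      - tensorLeg23 (r (u2 - u3) (v2 - v3)) * tensorLeg12 (r (u1 - u3) (v1 - v2))
      + tensorLeg13 (r (u1 - u3) (v1 - v3)) * tensorLeg23 (r (u2 - u1) (v2 - v3)) = 0 := by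
  simpa only [neg_sub, sub_add_sub_cancel, sub_add_sub_cancel'] using
    hr (u1 - u3) (u2 - u1) (v1 - v2) (v2 - v3)

theorem IsAYBESolution.three_point_dual (hr : IsAYBESolution r) (hu : IsUnitaryRMatrix r)
    (u1 u2 u3 v1 v2 v3 : G) :
    tensorLeg23 (r (u2 - u3) (v2 - v3)) * tensorLeg13 (r (u1 - u2) (v1 - v3))
      - tensorLeg12 (r (u1 - u2) (v1 - v2)) * tensorLeg23 (r (u1 - u3) (v2 - v3))
      + tensorLeg13 (r (u1 - u3) (v1 - v3)) * tensorLeg12 (r (u3 - u2) (v1 - v2)) = 0 := by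
  simpa only [map_add, map_sub, map_mul, map_zero, tensorSwap13_tensorLeg12,
    tensorSwap13_tensorLeg13, tensorSwap13_tensorLeg23, hu.comm_apply, map_neg_mul_map_neg,
    neg_sub] using congrArg tensorSwap13 (hr.three_point u3 u2 u1 v3 v2 v1)

theorem IsAYBESolution.triple_sub_triple_eq_leg23 (hr : IsAYBESolution r)
    (hu : IsUnitaryRMatrix r) {s : G → G → A ⊗[R] A} (hs : ∀ u v, s u v = r u v * r (-u) v)
    (u1 u2 u3 v1 v2 v3 : G) :
    tensorLeg12 (r (u1 - u2) (v1 - v2)) * tensorLeg13 (r (u2 - u3) (v1 - v3))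
          * tensorLeg23 (r (u1 - u2) (v2 - v3))
        - tensorLeg23 (r (u2 - u3) (v2 - v3)) * tensorLeg13 (r (u1 - u2) (v1 - v3))
          * tensorLeg12 (r (u2 - u3) (v1 - v2))
      = tensorLeg23 (s (u2 - u3) (v2 - v3)) * tensorLeg13 (r (u1 - u3) (v1 - v3))
        - tensorLeg13 (r (u1 - u3) (v1 - v3)) * tensorLeg23 (s (u2 - u1) (v2 - v3)) := by
  simp only [hs, map_mul, neg_sub]
  linear_combination (norm := skip)
    hr.three_point u1 u2 u3 v1 v2 v3 * tensorLeg23 (r (u1 - u2) (v2 - v3))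
      - tensorLeg23 (r (u2 - u3) (v2 - v3)) * hr.three_point_dual hu u1 u3 u2 v1 v2 v3
  simp only [sub_mul, mul_sub, add_mul, mul_add, mul_assoc, zero_mul, mul_zero]
  abel

theorem IsAYBESolution.triple_sub_triple_eq_leg12 (hr : IsAYBESolution r)
    (hu : IsUnitaryRMatrix r) {s : G → G → A ⊗[R] A} (hs : ∀ u v, s u v = r u v * r (-u) v)
    (u1 u2 u3 v1 v2 v3 : G) :
    tensorLeg12 (r (u1 - u2) (v1 - v2)) * tensorLeg13 (r (u2 - u3) (v1 - v3))
          * tensorLeg23 (r (u1 - u2) (v2 - v3))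
        - tensorLeg23 (r (u2 - u3) (v2 - v3)) * tensorLeg13 (r (u1 - u2) (v1 - v3))
          * tensorLeg12 (r (u2 - u3) (v1 - v2))
      = tensorLeg13 (r (u1 - u3) (v1 - v3)) * tensorLeg12 (s (u3 - u2) (v1 - v2))
        - tensorLeg12 (s (u1 - u2) (v1 - v2)) * tensorLeg13 (r (u1 - u3) (v1 - v3)) := by
  simp only [hs, map_mul, neg_sub]
  linear_combination (norm := skip)
    tensorLeg12 (r (u1 - u2) (v1 - v2)) * hr.three_point u2 u1 u3 v1 v2 v3
      - hr.three_point_dual hu u1 u2 u3 v1 v2 v3 * tensorLeg12 (r (u2 - u3) (v1 - v2))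
  simp only [sub_mul, mul_sub, add_mul, mul_add, mul_assoc, zero_mul, mul_zero]
  abel

end AYBE

/-- Lemma `main-AYBE-lem1`: for a unitary solution of the AYBE, setting
`s(u,v) = r(u,v)·r(−u,v)`, the three displayed expressions coincide. -/
theorem stmt6 (N : ℕ)
    (r : ℂ → ℂ → TT (Fin N))
    (hAYBE : ∀ u u' v v' : ℂ,
      leg12 (Fin N) (r (-u') v) * leg13 (Fin N) (r (u + u') (v + v'))
        - leg23 (Fin N) (r (u + u') v') * leg12 (Fin N) (r u v)
        + leg13 (Fin N) (r u (v + v')) * leg23 (Fin N) (r u' v') = 0)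
    (hunit : ∀ u v : ℂ, flip21 (Fin N) (r (-u) (-v)) = - r u v)
    (s : ℂ → ℂ → TT (Fin N))
    (hs : ∀ u v : ℂ, s u v = r u v * r (-u) v) :
    ∀ u1 u2 u3 v1 v2 v3 : ℂ,
      (leg12 (Fin N) (r (u1 - u2) (v1 - v2)) * leg13 (Fin N) (r (u2 - u3) (v1 - v3))
            * leg23 (Fin N) (r (u1 - u2) (v2 - v3))
          - leg23 (Fin N) (r (u2 - u3) (v2 - v3)) * leg13 (Fin N) (r (u1 - u2) (v1 - v3))
            * leg12 (Fin N) (r (u2 - u3) (v1 - v2))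
        = leg23 (Fin N) (s (u2 - u3) (v2 - v3)) * leg13 (Fin N) (r (u1 - u3) (v1 - v3))
          - leg13 (Fin N) (r (u1 - u3) (v1 - v3)) * leg23 (Fin N) (s (u2 - u1) (v2 - v3)))
      ∧ (leg23 (Fin N) (s (u2 - u3) (v2 - v3)) * leg13 (Fin N) (r (u1 - u3) (v1 - v3))
            - leg13 (Fin N) (r (u1 - u3) (v1 - v3)) * leg23 (Fin N) (s (u2 - u1) (v2 - v3))
        = leg13 (Fin N) (r (u1 - u3) (v1 - v3)) * leg12 (Fin N) (s (u3 - u2) (v1 - v2))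
          - leg12 (Fin N) (s (u1 - u2) (v1 - v2)) * leg13 (Fin N) (r (u1 - u3) (v1 - v3))) := by
  intro u1 u2 u3 v1 v2 v3
  have hII := IsAYBESolution.triple_sub_triple_eq_leg23 hAYBE hunit hs u1 u2 u3 v1 v2 v3
  have hIII := IsAYBESolution.triple_sub_triple_eq_leg12 hAYBE hunit hs u1 u2 u3 v1 v2 v3
  exact ⟨hII, hII.symm.trans hIII⟩
end
end

section
/- Let r : ℂ × ℂ → A⊗A satisfy the associative Yang–Baxter equation r^{12}(−u',v)·r^{13}(u+u',v+v') − r^{23}(u+u',v')·r^{12}(u,v) + r^{13}(u,v+v')·r^{23}(u',v') = 0 and the unitarity condition r^{21}(−u,−v) = −r(u,v) for all u, u', v, v' ∈ ℂ. Suppose there is a scalar function λ : ℂ × ℂ → ℂ with λ(−u,v) = λ(u,v) such that r(u,v)·r(−u,v) = λ(u,v)·(1⊗1) for all u, v. Then for every fixed u ∈ ℂ, the function v ↦ r(u,v) satisfies the quantum Yang–Baxter equation with spectral parameter: r^{12}(u,v)·r^{13}(u,v+v')·r^{23}(u,v') = r^{23}(u,v')·r^{13}(u,v+v')·r^{12}(u,v)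 for all v, v' ∈ ℂ. -/
open scoped TensorProduct
set_option maxHeartbeats 1000000
noncomputable section

variable (S : Type) [Fintype S] [DecidableEq S]

/-!
Write `A₁₂ = r(u,v)¹², A₁₃ = r(u,v+v')¹³, A₂₃ = r(u,v')²³` and `B₁₂ = r(-u,v)¹²`,
`C₁₃ = r(2u,v+v')¹³`, `C₂₃ = r(2u,v')²³`. The AYBE at `(u,u,v,v')` reads
`A₁₃ A₂₃ = C₂₃ A₁₂ - B₁₂ C₁₃`, and the AYBE at `(u,u,-v,v+v')`, with its first two tensor
factors swapped and unitarity applied, reads `A₂₃ A₁₃ = A₁₂ C₂₃ - C₁₃ B₁₂`. Multiplying the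
first by `A₁₂` on the left and the second by `A₁₂` on the right, both sides of the QYBE become
`A₁₂ C₂₃ A₁₂ - λ C₁₃`, since `A₁₂ B₁₂ = B₁₂ A₁₂ = λ`.
-/

theorem mul_mul_eq_mul_mul_of_aybe {K R : Type*} [CommSemiring K] [Ring R] [Algebra K R]
    {a₁₂ a₁₃ a₂₃ b₁₂ c₁₃ c₂₃ : R} {t : K}
    (h₁ : b₁₂ * c₁₃ - c₂₃ * a₁₂ + a₁₃ * a₂₃ = 0) (h₂ : -a₁₂ * c₂₃ - c₁₃ * -b₁₂ + a₂₃ * a₁₃ = 0)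
    (hab : a₁₂ * b₁₂ = t • 1) (hba : b₁₂ * a₁₂ = t • 1) :
    a₁₂ * a₁₃ * a₂₃ = a₂₃ * a₁₃ * a₁₂ := by
  have e₁ : a₁₃ * a₂₃ = c₂₃ * a₁₂ - b₁₂ * c₁₃ := by rw [← sub_eq_zero, ← h₁]; abel
  have e₂ : a₂₃ * a₁₃ = a₁₂ * c₂₃ - c₁₃ * b₁₂ := by rw [← sub_eq_zero, ← h₂]; noncomm_ring
  calc a₁₂ * a₁₃ * a₂₃ = a₁₂ * c₂₃ * a₁₂ - a₁₂ * b₁₂ * c₁₃ := by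
        rw [mul_assoc, e₁]; noncomm_ring
    _ = a₁₂ * c₂₃ * a₁₂ - c₁₃ * (b₁₂ * a₁₂) := by
        rw [hab, hba, smul_one_mul, mul_smul_one]
    _ = a₂₃ * a₁₃ * a₁₂ := by
        rw [e₂]; noncomm_ring

section Legs

variable {S}

open Algebra.TensorProduct

theorem leftComm_leg12 (x : TT S) :
    leftComm ℂ (Mat S) (Mat S) (Mat S) (leg12 S x) = leg12 S (flip21 S x) :=
  x.induction_on (by simp) (fun _ _ => rfl) fun _ _ hx hy => by simp only [map_add, hx, hy]

theorem leftComm_leg13 (x : TT S) :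
    leftComm ℂ (Mat S) (Mat S) (Mat S) (leg13 S x) = leg23 S x :=
  x.induction_on (by simp) (fun _ _ => rfl) fun _ _ hx hy => by simp only [map_add, hx, hy]

theorem leftComm_leg23 (x : TT S) :
    leftComm ℂ (Mat S) (Mat S) (Mat S) (leg23 S x) = leg13 S x :=
  x.induction_on (by simp) (fun _ _ => rfl) fun _ _ hx hy => by simp only [map_add, hx, hy]

end Legs

/-- a unitary solution of the AYBE such that `r(u,v)·r(−u,v)` is a scalar
multiple of `1 ⊗ 1` (with an even scalar function) satisfies, for each fixed `u`, the
quantum Yang–Baxter equation with spectral parameter. -/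
theorem stmt7 (N : ℕ)
    (r : ℂ → ℂ → TT (Fin N))
    (hAYBE : ∀ u u' v v' : ℂ,
      leg12 (Fin N) (r (-u') v) * leg13 (Fin N) (r (u + u') (v + v'))
        - leg23 (Fin N) (r (u + u') v') * leg12 (Fin N) (r u v)
        + leg13 (Fin N) (r u (v + v')) * leg23 (Fin N) (r u' v') = 0)
    (hunit : ∀ u v : ℂ, flip21 (Fin N) (r (-u) (-v)) = - r u v)
    (lam : ℂ → ℂ → ℂ)
    (hlam : ∀ u v : ℂ, lam (-u) v = lam u v)
    (hscal : ∀ u v : ℂ, r u v * r (-u) v = lam u v • (1 : TT (Fin N))) :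
    ∀ u v v' : ℂ,
      leg12 (Fin N) (r u v) * leg13 (Fin N) (r u (v + v')) * leg23 (Fin N) (r u v')
        = leg23 (Fin N) (r u v') * leg13 (Fin N) (r u (v + v')) * leg12 (Fin N) (r u v) := by
  intro u v v'
  have aybe_swapped :=
    congrArg (Algebra.TensorProduct.leftComm ℂ (Mat (Fin N)) (Mat (Fin N)) (Mat (Fin N)))
    (hAYBE u u (-v) (v + v'))
  rw [neg_add_cancel_left] at aybe_swapped
  have hunit' : flip21 (Fin N) (r u (-v)) = -r (-u) v := by simpa using hunit (-u) v
  simp only [map_add, map_sub, map_mul, map_zero, map_neg, leftComm_leg12, leftComm_leg13,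
    leftComm_leg23, hunit, hunit'] at aybe_swapped
  have hscal₁₂ (u : ℂ) : leg12 (Fin N) (r u v) * leg12 (Fin N) (r (-u) v) = lam u v • 1 := by
    rw [← map_mul, hscal, ← Algebra.algebraMap_eq_smul_one, AlgHom.commutes,
      Algebra.algebraMap_eq_smul_one]
  exact mul_mul_eq_mul_mul_of_aybe (K := ℂ) (hAYBE u u v v') aybe_swapped (hscal₁₂ u)
    (by simpa [hlam] using hscal₁₂ (-u))
end
end

section
/- Fix N ≥ 1, n ≥ 1, and let m : ℤ × ℤ/N → ℤ, written m^j_i, satisfy m^{j+n}_i = m^j_{i−1} and the simplicity conditions: (a) m^j_i − m^j_{i'} ∈ {−1, 0, 1} for all i, i', j; (b) for all i ≠ i' in ℤ/N, the sequence (m^j_i − m^j_{i'})_{j∈ℤ} is not identically zero, and consecutive nonzero entries have opposite signs (whenever j1 < j2 with m^{j1}_i − m^{j1}_{i'} ≠ 0, m^{j2}_i − m^{j2}_{i'} ≠ 0 and m^j_i = m^j_{i'} for all j1 < j < j2, one has m^{j1}_i − m^{j1}_{i'} = −(m^{j2}_i − m^{j2}_{i'}))). Define the relation ≺ on S = ℤ/N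 by: i ≺ i' iff i ≠ i' and either m^0_i < m^0_{i'}, or m^0_i = m^0_{i'} and the first nonzero term of the sequence (m^j_i − m^j_{i'})_{j≥0} equals −1. Set C(i) = i − 1 and P1 = {(i, i') : i ≠ i', m^j_i = m^j_{i'} for all 0 < j < n, and C(i) ≺ C(i')}, P2 = (C×C)(P1). Then: (1) ≺ is a strict total order on S; (2) every (s, s') ∈ P2 satisfies s ≺ s', and P1, P2 satisfy the convexity conditions: for all s ≺ s' ≺ s'', (s, s'') ∈ P1 implies (s, s'), (s', s'') ∈ P1; (s, s'') ∈ P2 implies (s, s'), (s', s'') ∈ P2; (s', s) ∈ P1 implies (s', s''), (s'', s) ∈ P1; and (s'', s') ∈ P1 implies (s'', s), (s, s') ∈ P1; (3) consequently, with C0 the successor cyclic permutation of (S, ≺), the sets Γ1 = P1 ∩ Γ_{C0} and Γ2 = P2 ∩ Γ_{C0} define an associative BD-structure (C0, C, Γ1, Γ2) on the completely ordered set (S, ≺) with α0 ∉ Γ2, whose associated pair (P_1, P_2) equals (P1, P2). -/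
noncomputable section

variable {S : Type}

/-- The graph `Γ_{C0} = {(s, C0 s)}` of a permutation `C0`. -/
def graphOf (C0 : Equiv.Perm S) : Set (S × S) := {p : S × S | p.2 = C0 p.1}

/-- `P(Γ)`: the set of pairs `(s, C0^k s)`, `k ≥ 1`, all of whose intermediate edges lie
in `Γ`. -/
def Ppath (C0 : Equiv.Perm S) (Γ : Set (S × S)) : Set (S × S) :=
  {p : S × S | ∃ k : ℕ, 1 ≤ k ∧ p.2 = (C0 ^ k) p.1 ∧
    ∀ j : ℕ, j < k → ((C0 ^ j) p.1, (C0 ^ (j + 1)) p.1) ∈ Γ}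

/-- The image of a set of pairs under `C × C`. -/
def CCimage (C : Equiv.Perm S) (P : Set (S × S)) : Set (S × S) :=
  (fun p : S × S => (C p.1, C p.2)) '' P

variable (N : ℕ) [NeZero N]

/-- The order `≺` on `ℤ/N` defined by the matrix `m`: `i ≺ i'` iff `i ≠ i'` and either
`m⁰_i < m⁰_{i'}`, or `m⁰_i = m⁰_{i'}` and the first nonzero term of `(m^j_i − m^j_{i'})_{j ≥ 0}`
equals `−1`. -/
def precM (m : ℤ → ZMod N → ℤ) (i i' : ZMod N) : Prop :=
  i ≠ i' ∧ (m 0 i < m 0 i' ∨ (m 0 i = m 0 i' ∧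
    ∃ j : ℕ, (∀ l : ℕ, l < j → m l i = m l i') ∧ m j i - m j i' = -1))

/-- The permutation `C : i ↦ i − 1` of `ℤ/N`. -/
def Cm : Equiv.Perm (ZMod N) := Equiv.subRight (1 : ZMod N)

/-- `P1 = {(i,i') : i ≠ i', m^j_i = m^j_{i'} for 0 < j < n, and C(i) ≺ C(i')}`. -/
def P1M (n : ℕ) (m : ℤ → ZMod N → ℤ) : Set (ZMod N × ZMod N) :=
  {p : ZMod N × ZMod N | p.1 ≠ p.2 ∧ (∀ j : ℤ, 0 < j → j < n → m j p.1 = m j p.2) ∧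
    precM N m (p.1 - 1) (p.2 - 1)}

/-- `P2 = (C×C)(P1)`. -/
def P2M (n : ℕ) (m : ℤ → ZMod N → ℤ) : Set (ZMod N × ZMod N) :=
  CCimage (Cm N) (P1M N n m)

/-- The simplicity conditions (a) and (b) on the matrix `m`, together with the
periodicity rule `m^{j+n}_i = m^j_{i−1}`. -/
def SimpleMatrix (n : ℕ) (m : ℤ → ZMod N → ℤ) : Prop :=
  (∀ (j : ℤ) (i : ZMod N), m (j + n) i = m j (i - 1)) ∧
  (∀ (j : ℤ) (i i' : ZMod N), m j i - m j i' ∈ ({-1, 0, 1} : Set ℤ)) ∧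
  (∀ i i' : ZMod N, i ≠ i' → ∃ j : ℤ, m j i ≠ m j i') ∧
  (∀ i i' : ZMod N, i ≠ i' → ∀ j1 j2 : ℤ, j1 < j2 →
    m j1 i ≠ m j1 i' → m j2 i ≠ m j2 i' → (∀ j : ℤ, j1 < j → j < j2 → m j i = m j i') →
    m j1 i - m j1 i' = -(m j2 i - m j2 i'))


set_option linter.unusedSectionVars false

section AuxBD

variable {N} {n : ℕ} {m : ℤ → ZMod N → ℤ}

/-- The order `≺` started at time `j₀`. -/
def ordJ (m : ℤ → ZMod N → ℤ) (j₀ : ℤ) (i i' : ZMod N) : Prop :=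
  i ≠ i' ∧ ∃ j : ℤ, j₀ ≤ j ∧ (∀ l : ℤ, j₀ ≤ l → l < j → m l i = m l i') ∧
    m j i - m j i' = -1

lemma rng (hm : SimpleMatrix N n m) (j : ℤ) (i i' : ZMod N) :
    m j i - m j i' = -1 ∨ m j i = m j i' ∨ m j i - m j i' = 1 := by
  have h := hm.2.1 j i i'
  simp only [Set.mem_insert_iff, Set.mem_singleton_iff] at h
  rcases h with h | h | h
  · exact Or.inl h
  · exact Or.inr (Or.inl (by linarith))
  · exact Or.inr (Or.inr h)

lemma period_nat (hm : SimpleMatrix N n m) : ∀ (k : ℕ) (j : ℤ) (i : ZMod N),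
    m (j + (n : ℤ) * k) i = m j (i - (k : ZMod N)) := by
  intro k
  induction k with
  | zero => simp
  | succ k ih =>
    intro j i
    push_cast
    have h1 : (j + (n : ℤ) * ((k:ℤ) + 1) : ℤ) = (j + (n : ℤ) * k) + n := by ring
    rw [h1, hm.1, ih]
    congr 1
    ring

lemma periodT (hm : SimpleMatrix N n m) (j : ℤ) (i : ZMod N) :
    m (j + (n : ℤ) * (N : ℤ)) i = m j i := by
  have := period_nat hm N j i
  rwa [ZMod.natCast_self, sub_zero] at this

lemma periodT_iter (hm : SimpleMatrix N n m) (t : ℕ) (j : ℤ) (i : ZMod N) :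
    m (j + (n : ℤ) * (N : ℤ) * t) i = m j i := by
  induction t with
  | zero => simp
  | succ t ih =>
    push_cast
    have h1 : (j + (n:ℤ) * N * ((t:ℤ)+1) : ℤ) = (j + (n:ℤ)*N*t) + (n:ℤ)*N := by ring
    rw [h1, periodT hm]
    push_cast at ih
    exact ih

lemma exists_ge (hm : SimpleMatrix N n m) (hn : 1 ≤ n) {i i' : ZMod N} (hij : i ≠ i')
    (J : ℤ) : ∃ j : ℤ, J ≤ j ∧ m j i ≠ m j i' := by
  obtain ⟨j₁, h₁⟩ := hm.2.2.1 i i' hij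
  have hN : 1 ≤ (N : ℤ) := by
    have := NeZero.pos N; exact_mod_cast this
  have hn' : 1 ≤ (n : ℤ) := by exact_mod_cast hn
  set t : ℕ := (J - j₁).toNat with ht
  refine ⟨j₁ + (n:ℤ)*N*t, ?_, ?_⟩
  · have h2 : (J - j₁ : ℤ) ≤ t := Int.self_le_toNat _
    have h3 : (1:ℤ)*t ≤ ((n:ℤ)*(N:ℤ))*t :=
      mul_le_mul_of_nonneg_right (by nlinarith) (Int.natCast_nonneg t)
    linarith
  · rw [periodT_iter hm, periodT_iter hm]
    exact h₁

lemma exists_first (hm : SimpleMatrix N n m) (hn : 1 ≤ n) {i i' : ZMod N} (hij : i ≠ i')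
    (J : ℤ) : ∃ j : ℤ, J ≤ j ∧ (∀ l : ℤ, J ≤ l → l < j → m l i = m l i') ∧
      m j i ≠ m j i' := by
  classical
  have hbdd : ∃ b : ℤ, ∀ z : ℤ, (J ≤ z ∧ m z i ≠ m z i') → b ≤ z := ⟨J, fun z hz => hz.1⟩
  have hinh : ∃ z : ℤ, J ≤ z ∧ m z i ≠ m z i' := exists_ge hm hn hij J
  obtain ⟨lb, hlb, hmin⟩ := Int.exists_least_of_bdd hbdd hinh
  refine ⟨lb, hlb.1, ?_, hlb.2⟩
  intro l hJl hl
  by_contra hne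
  exact absurd (hmin l ⟨hJl, hne⟩) (by omega)

lemma ordJ_ne {j₀ : ℤ} {i i' : ZMod N} (h : ordJ m j₀ i i') : i ≠ i' := h.1

lemma ordJ_of_d {j₀ : ℤ} {i i' : ZMod N} (hd : m j₀ i - m j₀ i' = -1) :
    ordJ m j₀ i i' := by
  have hne : i ≠ i' := by rintro rfl; simp at hd
  exact ⟨hne, j₀, le_refl _, fun l h1 h2 => absurd h1 (not_le.2 h2), hd⟩

lemma ordJ_asymm {j₀ : ℤ} {i i' : ZMod N} (h : ordJ m j₀ i i') (h' : ordJ m j₀ i' i) :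
    False := by
  obtain ⟨hne, j1, hj1, hz1, hv1⟩ := h
  obtain ⟨hne', j2, hj2, hz2, hv2⟩ := h'
  rcases lt_trichotomy j1 j2 with hlt | rfl | hlt
  · have := hz2 j1 hj1 hlt; linarith
  · linarith
  · have := hz1 j2 hj2 hlt; linarith

lemma ordJ_irrefl {j₀ : ℤ} {i : ZMod N} (h : ordJ m j₀ i i) : False := h.1 rfl

lemma ordJ_total (hm : SimpleMatrix N n m) (hn : 1 ≤ n) {i i' : ZMod N} (hij : i ≠ i')
    (j₀ : ℤ) : ordJ m j₀ i i' ∨ ordJ m j₀ i' i := by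
  obtain ⟨j, hj, hz, hv⟩ := exists_first hm hn hij j₀
  rcases rng hm j i i' with h | h | h
  · exact Or.inl ⟨hij, j, hj, hz, h⟩
  · exact absurd h hv
  · exact Or.inr ⟨hij.symm, j, hj, fun l h1 h2 => (hz l h1 h2).symm, by linarith⟩

lemma ordJ_trans (hm : SimpleMatrix N n m) {j₀ : ℤ} {i i' i'' : ZMod N}
    (h : ordJ m j₀ i i') (h' : ordJ m j₀ i' i'') : ordJ m j₀ i i'' := by
  obtain ⟨hne, j1, hj1, hz1, hv1⟩ := h
  obtain ⟨hne', j2, hj2, hz2, hv2⟩ := h'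
  have hnei : i ≠ i'' := by
    rintro rfl
    rcases lt_trichotomy j1 j2 with hlt | rfl | hlt
    · have := hz2 j1 hj1 hlt; linarith
    · linarith
    · have := hz1 j2 hj2 hlt; linarith
  rcases lt_trichotomy j1 j2 with hlt | rfl | hlt
  · refine ⟨hnei, j1, hj1, fun l h1 h2 => ?_, ?_⟩
    · rw [hz1 l h1 h2, hz2 l h1 (h2.trans hlt)]
    · have := hz2 j1 hj1 hlt; linarith
  · exfalso; rcases rng hm j1 i i'' with h | h | h <;> linarith
  · refine ⟨hnei, j2, hj2, fun l h1 h2 => ?_, ?_⟩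
    · rw [hz1 l h1 (h2.trans hlt), hz2 l h1 h2]
    · have := hz1 j2 hj2 hlt; linarith

/-- L4b : no contact at `j₀` means the orders at `j₀` and `j₀+1` agree. -/
lemma ordJ_succ_iff {j₀ : ℤ} {i i' : ZMod N} (h0 : m j₀ i = m j₀ i') :
    ordJ m (j₀ + 1) i i' ↔ ordJ m j₀ i i' := by
  constructor
  · rintro ⟨hne, j, hj, hz, hv⟩
    refine ⟨hne, j, by omega, fun l h1 h2 => ?_, hv⟩
    rcases eq_or_lt_of_le h1 with rfl | h1'
    · exact h0
    · exact hz l (by omega) h2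
  · rintro ⟨hne, j, hj, hz, hv⟩
    have hjj : j ≠ j₀ := by rintro rfl; rw [h0] at hv; simp at hv
    exact ⟨hne, j, by omega, fun l h1 h2 => hz l (by omega) h2, hv⟩

/-- L4c : contact `-1` at `j₀` flips the order at `j₀+1`. -/
lemma ordJ_flip (hm : SimpleMatrix N n m) (hn : 1 ≤ n) {j₀ : ℤ} {i i' : ZMod N}
    (hd : m j₀ i - m j₀ i' = -1) : ordJ m (j₀ + 1) i' i := by
  have hne : i ≠ i' := by rintro rfl; simp at hd
  obtain ⟨j, hj, hz, hv⟩ := exists_first hm hn hne (j₀ + 1)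
  have halt := hm.2.2.2 i i' hne j₀ j (by omega) (by intro hc; rw [hc] at hd; simp at hd)
    hv (fun l h1 h2 => hz l (by omega) h2)
  refine ⟨hne.symm, j, hj, fun l h1 h2 => (hz l h1 h2).symm, by linarith⟩

/-- orders at `j₀` and `j₀+1` both `i ≺ i'` force no contact at `j₀`. -/
lemma eq_of_ord_ord (hm : SimpleMatrix N n m) (hn : 1 ≤ n) {j₀ : ℤ} {i i' : ZMod N}
    (h0 : ordJ m j₀ i i') (h1 : ordJ m (j₀ + 1) i i') : m j₀ i = m j₀ i' := by
  rcases rng hm j₀ i i' with h | h | h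
  · exact absurd (ordJ_flip hm hn h) (fun hc => ordJ_asymm h1 hc)
  · exact h
  · exact absurd (ordJ_of_d (i := i') (i' := i) (by linarith)) (fun hc => ordJ_asymm h0 hc)

/-- flip between `j₀` and `j₀+1` forces contact `-1` at `j₀`. -/
lemma d_of_ord_flip (hm : SimpleMatrix N n m) (hn : 1 ≤ n) {j₀ : ℤ} {i i' : ZMod N}
    (h0 : ordJ m j₀ i i') (h1 : ordJ m (j₀ + 1) i' i) : m j₀ i - m j₀ i' = -1 := by
  rcases rng hm j₀ i i' with h | h | h
  · exact h
  · exact absurd ((ordJ_succ_iff h).2 h0) (fun hc => ordJ_asymm h1 hc)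
  · exact absurd (ordJ_of_d (i := i') (i' := i) (by linarith)) (fun hc => ordJ_asymm h0 hc)

/-- L4b iterated. -/
lemma ordJ_add_iff {j₀ : ℤ} {i i' : ZMod N} : ∀ (k : ℕ),
    (∀ l : ℤ, j₀ ≤ l → l < j₀ + k → m l i = m l i') →
    (ordJ m (j₀ + k) i i' ↔ ordJ m j₀ i i')
  | 0, _ => by simp
  | (k+1), hz => by
    have h1 : (j₀ + ((k:ℤ)+1)) = (j₀ + k) + 1 := by ring
    push_cast
    rw [h1, ordJ_succ_iff (hz (j₀ + k) (by omega) (by push_cast; omega))]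
    exact ordJ_add_iff k (fun l a b => hz l a (by push_cast; omega))

lemma mshift (hm : SimpleMatrix N n m) (l : ℤ) (i : ZMod N) :
    m l (i - 1) = m (l + n) i := (hm.1 l i).symm

lemma ordJ_shift (hm : SimpleMatrix N n m) {j₀ : ℤ} {i i' : ZMod N} :
    ordJ m (j₀ + n) i i' ↔ ordJ m j₀ (i - 1) (i' - 1) := by
  have hne : i ≠ i' ↔ i - 1 ≠ i' - 1 := by
    constructor
    · intro h hc; exact h (by linear_combination hc)
    · intro h hc; exact h (by rw [hc])
  constructor
  · rintro ⟨h, j, hj, hz, hv⟩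
    refine ⟨hne.1 h, j - n, by omega, fun l h1 h2 => ?_, ?_⟩
    · rw [mshift hm, mshift hm]
      exact hz (l + n) (by omega) (by omega)
    · rw [mshift hm, mshift hm]
      simpa using hv
  · rintro ⟨h, j, hj, hz, hv⟩
    refine ⟨hne.2 h, j + n, by omega, fun l h1 h2 => ?_, ?_⟩
    · have := hz (l - n) (by omega) (by omega)
      rw [mshift hm, mshift hm] at this
      simpa using this
    · rw [mshift hm, mshift hm] at hv
      exact hv

lemma precM_iff_ordJ (hm : SimpleMatrix N n m) {i i' : ZMod N} :
    precM N m i i' ↔ ordJ m 0 i i' := by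
  constructor
  · rintro ⟨hne, h | ⟨he, j, hz, hv⟩⟩
    · refine ⟨hne, 0, le_refl _, fun l h1 h2 => absurd h1 (not_le.2 h2), ?_⟩
      rcases rng hm 0 i i' with hh | hh | hh
      · exact hh
      · exact absurd hh (by intro hc; rw [hc] at h; exact lt_irrefl _ h)
      · linarith
    · refine ⟨hne, (j : ℤ), Int.natCast_nonneg j, fun l h1 h2 => ?_, hv⟩
      have : l = ((l.toNat : ℕ) : ℤ) := (Int.toNat_of_nonneg h1).symm
      rw [this]
      exact hz l.toNat (by omega)
  · rintro ⟨hne, j, hj, hz, hv⟩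
    refine ⟨hne, ?_⟩
    rcases eq_or_lt_of_le hj with rfl | hj'
    · exact Or.inl (by linarith)
    · refine Or.inr ⟨hz 0 (le_refl _) hj', ⟨j.toNat, fun l hl => ?_, ?_⟩⟩
      · exact hz l (Int.natCast_nonneg l) (by omega)
      · rw [Int.toNat_of_nonneg hj]
        exact hv

lemma precM_shift (hm : SimpleMatrix N n m) {i i' : ZMod N} :
    precM N m (i - 1) (i' - 1) ↔ ordJ m n i i' := by
  rw [precM_iff_ordJ hm, ← ordJ_shift hm, zero_add]

lemma mem_P1_iff (hm : SimpleMatrix N n m) {p : ZMod N × ZMod N} :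
    p ∈ P1M N n m ↔ (p.1 ≠ p.2 ∧ (∀ j : ℤ, 0 < j → j < n → m j p.1 = m j p.2) ∧
      ordJ m n p.1 p.2) := by
  unfold P1M
  rw [Set.mem_setOf_eq, precM_shift hm]

lemma mem_P2_iff {p : ZMod N × ZMod N} :
    p ∈ P2M N n m ↔ (p.1 + 1, p.2 + 1) ∈ P1M N n m := by
  unfold P2M CCimage
  constructor
  · rintro ⟨q, hq, hq2⟩
    have h1 : q.1 - 1 = p.1 := congrArg Prod.fst hq2
    have h2 : q.2 - 1 = p.2 := congrArg Prod.snd hq2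
    have : (p.1 + 1, p.2 + 1) = q := by
      rw [← h1, ← h2]; simp [Cm]
    rwa [this]
  · intro h
    exact ⟨(p.1 + 1, p.2 + 1), h, by simp [Cm]⟩

lemma mem_P2_iff' (hm : SimpleMatrix N n m) {p : ZMod N × ZMod N} :
    p ∈ P2M N n m ↔ (p.1 ≠ p.2 ∧ (∀ j : ℤ, -(n:ℤ) < j → j < 0 → m j p.1 = m j p.2) ∧
      ordJ m 0 p.1 p.2) := by
  rw [mem_P2_iff, mem_P1_iff hm]
  have e1 : ∀ x : ZMod N, x + 1 - 1 = x := fun x => by ring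
  constructor
  · rintro ⟨hne, hz, ho⟩
    refine ⟨fun hc => hne (by rw [hc]), fun j h1 h2 => ?_, ?_⟩
    · have := hz (j + n) (by omega) (by omega)
      rw [← mshift hm, ← mshift hm, e1, e1] at this
      exact this
    · have := (ordJ_shift hm (j₀ := 0)).1 (by rwa [zero_add])
      rwa [e1, e1] at this
  · rintro ⟨hne, hz, ho⟩
    refine ⟨fun hc => hne (by linear_combination hc), fun j h1 h2 => ?_, ?_⟩
    · have h3 := hz (j - n) (by omega) (by omega)
      have e2 : ∀ x : ZMod N, m j (x + 1) = m (j - (n:ℤ)) x := fun x => by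
        conv_lhs => rw [show (j:ℤ) = (j - n) + n by ring, ← mshift hm, e1]
      show m j (p.1 + 1) = m j (p.2 + 1)
      rw [e2, e2, h3]
    · rw [← zero_add (n:ℤ), ordJ_shift hm, e1, e1]
      exact ho

/-- Betweenness propagation, upwards. -/
lemma BPup (hm : SimpleMatrix N n m) {j : ℤ} {i v i' : ZMod N}
    (h1 : ordJ m j i v) (h2 : ordJ m j v i') (hE : m j i = m j i') :
    m j i = m j v ∧ ordJ m (j+1) i v ∧ ordJ m (j+1) v i' := by
  have hab : (m j i - m j v) + (m j v - m j i') = 0 := by linarith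
  rcases rng hm j i v with ha | ha | ha
  · have hb : m j v - m j i' = 1 := by linarith
    exact absurd (ordJ_of_d (i := i') (i' := v) (by linarith)) (fun hc => ordJ_asymm h2 hc)
  · have hb : m j v = m j i' := by linarith
    exact ⟨ha, (ordJ_succ_iff ha).2 h1, (ordJ_succ_iff hb).2 h2⟩
  · exact absurd (ordJ_of_d (i := v) (i' := i) (by linarith)) (fun hc => ordJ_asymm h1 hc)

/-- Betweenness propagation, downwards. -/
lemma BPdown (hm : SimpleMatrix N n m) (hn : 1 ≤ n) {j : ℤ} {i v i' : ZMod N}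
    (h1 : ordJ m (j+1) i v) (h2 : ordJ m (j+1) v i') (hE : m j i = m j i') :
    m j i = m j v ∧ ordJ m j i v ∧ ordJ m j v i' := by
  rcases rng hm j i v with ha | ha | ha
  · exact absurd (ordJ_flip hm hn ha) (fun hc => ordJ_asymm h1 hc)
  · have hb : m j v = m j i' := by linarith
    exact ⟨ha, (ordJ_succ_iff ha).1 h1, (ordJ_succ_iff hb).1 h2⟩
  · have hb : m j v - m j i' = -1 := by linarith
    exact absurd (ordJ_flip hm hn hb) (fun hc => ordJ_asymm h2 hc)

lemma BPup_iter (hm : SimpleMatrix N n m) {a : ℤ} {i v i' : ZMod N} : ∀ (k : ℕ),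
    (∀ l : ℤ, a ≤ l → l < a + k → m l i = m l i') →
    ordJ m a i v → ordJ m a v i' →
    (∀ l : ℤ, a ≤ l → l < a + k → m l i = m l v) ∧
      ordJ m (a + k) i v ∧ ordJ m (a + k) v i'
  | 0, _, h1, h2 => ⟨fun l hl1 hl2 => absurd hl2 (by push_cast; omega), by simpa using h1,
      by simpa using h2⟩
  | (k+1), hE, h1, h2 => by
    obtain ⟨hz, h1', h2'⟩ := BPup_iter hm k (fun l u w => hE l u (by push_cast; push_cast at w; omega)) h1 h2
    obtain ⟨he, h1'', h2''⟩ := BPup hm h1' h2' (hE (a+k) (by omega) (by push_cast; omega))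
    push_cast
    have harr : a + ((k:ℤ) + 1) = (a + k) + 1 := by ring
    rw [harr]
    refine ⟨fun l u w => ?_, h1'', h2''⟩
    rcases lt_or_ge l (a + k) with hlk | hlk
    · exact hz l u hlk
    · have hle : l = a + k := by omega
      rw [hle]; exact he

lemma BPdown_iter (hm : SimpleMatrix N n m) (hn : 1 ≤ n) {b : ℤ} {i v i' : ZMod N} :
    ∀ (k : ℕ),
    (∀ l : ℤ, b - k ≤ l → l < b → m l i = m l i') →
    ordJ m b i v → ordJ m b v i' →
    (∀ l : ℤ, b - k ≤ l → l < b → m l i = m l v) ∧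
      ordJ m (b - k) i v ∧ ordJ m (b - k) v i'
  | 0, _, h1, h2 => ⟨fun l hl1 hl2 => absurd hl2 (by push_cast at hl1; omega),
      by simpa using h1, by simpa using h2⟩
  | (k+1), hE, h1, h2 => by
    have hb : b = (b - 1) + 1 := by ring
    obtain ⟨he, h1', h2'⟩ := BPdown hm hn (hb ▸ h1) (hb ▸ h2)
      (hE (b-1) (by push_cast; omega) (by omega))
    obtain ⟨hz, h1'', h2''⟩ := BPdown_iter hm hn (b := b - 1) k
      (fun l u w => hE l (by push_cast; push_cast at u; omega) (by omega)) h1' h2'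
    have harr : b - ((k:ℕ)+1 : ℕ) = (b - 1) - k := by push_cast; ring
    rw [harr]
    refine ⟨fun l u w => ?_, h1'', h2''⟩
    rcases lt_or_ge l (b-1) with hlk | hlk
    · exact hz l (by push_cast; push_cast at u; omega) hlk
    · have hle : l = b - 1 := by omega
      rw [hle]; exact he

/-- the closing alternation argument: if `m⁰ s - m⁰ s'' = -1` and contact on `(0,n)`
is zero then the first separation at time `≥ n` puts `s''` below `s`. -/
lemma tailflip (hm : SimpleMatrix N n m) (hn : 1 ≤ n) {s s'' : ZMod N}
    (hne : s ≠ s'') (hg0 : m 0 s - m 0 s'' = -1)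
    (hZ : ∀ j : ℤ, 0 < j → j < n → m j s = m j s'') : ordJ m (n : ℤ) s'' s := by
  obtain ⟨K, hK, hKz, hKv⟩ := exists_first hm hn hne (n : ℤ)
  have halt := hm.2.2.2 s s'' hne 0 K (by omega) (by intro hc; rw [hc] at hg0; simp at hg0)
    hKv (fun l h1 h2 => by
      rcases lt_or_ge l (n : ℤ) with hl | hl
      · exact hZ l h1 hl
      · exact hKz l hl h2)
  refine ⟨hne.symm, K, hK, fun l h1 h2 => (hKz l h1 h2).symm, by linarith⟩

lemma ordJ_one_iff_n (hn : 1 ≤ n) {i i' : ZMod N}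
    (hZ : ∀ j : ℤ, 0 < j → j < n → m j i = m j i') :
    ordJ m (n : ℤ) i i' ↔ ordJ m 1 i i' := by
  have harr : ((1:ℤ) + ((n-1 : ℕ) : ℤ)) = (n:ℤ) := by omega
  rw [← harr]
  exact ordJ_add_iff (n-1) (fun l u w => hZ l (by omega) (by omega))

lemma ordJ_zero_iff_n {i i' : ZMod N}
    (hZ : ∀ j : ℤ, 0 ≤ j → j < n → m j i = m j i') :
    ordJ m (n : ℤ) i i' ↔ ordJ m 0 i i' := by
  have harr : ((0:ℤ) + ((n : ℕ) : ℤ)) = (n:ℤ) := by omega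
  rw [← harr]
  exact ordJ_add_iff n (fun l u w => hZ l u (by omega))

lemma least_bad {i i' : ZMod N} (hcon : ∃ j : ℤ, 0 ≤ j ∧ j < n ∧ m j i ≠ m j i') :
    ∃ J : ℤ, (0 ≤ J ∧ J < n ∧ m J i ≠ m J i') ∧
      ∀ l : ℤ, 0 ≤ l → l < J → m l i = m l i' := by
  classical
  obtain ⟨J, hJ, hmin⟩ := Int.exists_least_of_bdd
    (P := fun z => 0 ≤ z ∧ z < n ∧ m z i ≠ m z i') ⟨0, fun z hz => hz.1⟩ hcon
  refine ⟨J, hJ, fun l u w => ?_⟩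
  by_contra hcc
  exact absurd (hmin l ⟨u, by omega, hcc⟩) (by omega)

/-- Convexity (i). -/
lemma conv1 (hm : SimpleMatrix N n m) (hn : 1 ≤ n) {s s' s'' : ZMod N}
    (h01 : ordJ m 0 s s') (h02 : ordJ m 0 s' s'') (hP : (s, s'') ∈ P1M N n m) :
    (s, s') ∈ P1M N n m ∧ (s', s'') ∈ P1M N n m := by
  obtain ⟨hne, hZ, hno⟩ := (mem_P1_iff hm).1 hP
  simp only at hne hZ hno
  have h02' : ordJ m 0 s s'' := ordJ_trans hm h01 h02
  have h1 : ordJ m 1 s s'' := (ordJ_one_iff_n hn hZ).1 hno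
  have hE0 : m 0 s = m 0 s'' :=
    eq_of_ord_ord hm hn h02' (by rwa [show (1:ℤ) = 0 + 1 by norm_num] at h1)
  obtain ⟨hz, hb1, hb2⟩ := BPup_iter hm (a := 0) n
    (fun l u w => by
      rcases eq_or_lt_of_le u with rfl | u'
      · exact hE0
      · exact hZ l u' (by omega)) h01 h02
  rw [zero_add] at hb1 hb2
  refine ⟨(mem_P1_iff hm).2 ⟨h01.1, fun j u w => hz j (le_of_lt u) (by omega), hb1⟩,
    (mem_P1_iff hm).2 ⟨h02.1, fun j u w => ?_, hb2⟩⟩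
  have e1 := hz j (le_of_lt u) (by omega)
  have e2 := hZ j u w
  simp only
  rw [← e1, e2]

/-- Convexity (ii). -/
lemma conv2 (hm : SimpleMatrix N n m) (hn : 1 ≤ n) {s s' s'' : ZMod N}
    (h01 : ordJ m 0 s s') (h02 : ordJ m 0 s' s'') (hP : (s, s'') ∈ P2M N n m) :
    (s, s') ∈ P2M N n m ∧ (s', s'') ∈ P2M N n m := by
  obtain ⟨hne, hZ, _⟩ := (mem_P2_iff' hm).1 hP
  simp only at hne hZ
  obtain ⟨hz, _, _⟩ := BPdown_iter hm hn (b := 0) (n-1)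
    (fun l u w => hZ l (by omega) w) h01 h02
  refine ⟨(mem_P2_iff' hm).2 ⟨h01.1, fun j u w => hz j (by omega) w, h01⟩,
    (mem_P2_iff' hm).2 ⟨h02.1, fun j u w => ?_, h02⟩⟩
  have e1 := hz j (by omega) w
  have e2 := hZ j u w
  simp only
  rw [← e1, e2]

/-- Convexity (iii). -/
lemma conv3 (hm : SimpleMatrix N n m) (hn : 1 ≤ n) {s s' s'' : ZMod N}
    (h01 : ordJ m 0 s s') (h02 : ordJ m 0 s' s'') (hP : (s', s) ∈ P1M N n m) :
    (s', s'') ∈ P1M N n m ∧ (s'', s) ∈ P1M N n m := by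
  obtain ⟨hne, hZ, hno⟩ := (mem_P1_iff hm).1 hP
  simp only at hne hZ hno
  have h1 : ordJ m 1 s' s := (ordJ_one_iff_n hn hZ).1 hno
  have ha0 : m 0 s - m 0 s' = -1 :=
    d_of_ord_flip hm hn h01 (by rwa [show (1:ℤ) = 0 + 1 by norm_num] at h1)
  have hsne : s ≠ s'' := (ordJ_trans hm h01 h02).1
  have hb0 : m 0 s' = m 0 s'' := by
    rcases rng hm 0 s' s'' with h | h | h
    · exfalso; rcases rng hm 0 s s'' with h' | h' | h' <;> linarith
    · exact h
    · exact absurd (ordJ_of_d (i := s'') (i' := s') (by linarith))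
        (fun hc => ordJ_asymm h02 hc)
  have Z1 : ∀ j : ℤ, 0 ≤ j → j < n → m j s' = m j s'' := by
    by_contra hcon
    push_neg at hcon
    obtain ⟨J, ⟨hJ0, hJn, hJv⟩, hminz⟩ := least_bad hcon
    obtain ⟨_, j₂, hj₂, hz₂, hv₂⟩ := h02
    have hJeq : J = j₂ := by
      rcases lt_trichotomy J j₂ with hlt | h | hlt
      · exact absurd (hz₂ J hJ0 hlt) hJv
      · exact h
      · exact absurd (hminz j₂ hj₂ hlt) (fun hc => by rw [hc] at hv₂; simp at hv₂)
    have hJne0 : J ≠ 0 := by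
      intro hc; rw [hc] at hJv; exact hJv hb0
    have hgJ : m J s - m J s'' = -1 := by
      have e1 : m J s' = m J s := hZ J (by omega) hJn
      have e2 : m J s' - m J s'' = -1 := by rw [hJeq]; exact hv₂
      linarith
    have hg0 : m 0 s - m 0 s'' = -1 := by linarith
    have hzmid : ∀ l : ℤ, 0 < l → l < J → m l s = m l s'' := fun l u w => by
      have e1 : m l s' = m l s := hZ l u (by omega)
      have e2 : m l s' = m l s'' := hminz l (le_of_lt u) w
      rw [← e1, e2]
    have halt := hm.2.2.2 s s'' hsne 0 J (by omega)
      (by intro hc; rw [hc] at hg0; simp at hg0)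
      (by intro hc; rw [hc] at hgJ; simp at hgJ) hzmid
    linarith
  have hg0 : m 0 s - m 0 s'' = -1 := by linarith
  have hZ2 : ∀ j : ℤ, 0 < j → j < n → m j s = m j s'' := fun j u w => by
    rw [← hZ j u w]; exact Z1 j (le_of_lt u) w
  refine ⟨(mem_P1_iff hm).2 ⟨h02.1, fun j u w => Z1 j (le_of_lt u) w,
      (ordJ_zero_iff_n Z1).2 h02⟩,
    (mem_P1_iff hm).2 ⟨hsne.symm, fun j u w => (hZ2 j u w).symm,
      tailflip hm hn hsne hg0 hZ2⟩⟩

/-- Convexity (iv). -/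
lemma conv4 (hm : SimpleMatrix N n m) (hn : 1 ≤ n) {s s' s'' : ZMod N}
    (h01 : ordJ m 0 s s') (h02 : ordJ m 0 s' s'') (hP : (s'', s') ∈ P1M N n m) :
    (s'', s) ∈ P1M N n m ∧ (s, s') ∈ P1M N n m := by
  obtain ⟨hne, hZ, hno⟩ := (mem_P1_iff hm).1 hP
  simp only at hne hZ hno
  have h1 : ordJ m 1 s'' s' := (ordJ_one_iff_n hn hZ).1 hno
  have hb0 : m 0 s' - m 0 s'' = -1 :=
    d_of_ord_flip hm hn h02 (by rwa [show (1:ℤ) = 0 + 1 by norm_num] at h1)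
  have hsne : s ≠ s'' := (ordJ_trans hm h01 h02).1
  have ha0 : m 0 s = m 0 s' := by
    rcases rng hm 0 s s' with h | h | h
    · exfalso; rcases rng hm 0 s s'' with h' | h' | h' <;> linarith
    · exact h
    · exact absurd (ordJ_of_d (i := s') (i' := s) (by linarith))
        (fun hc => ordJ_asymm h01 hc)
  have Z1 : ∀ j : ℤ, 0 ≤ j → j < n → m j s = m j s' := by
    by_contra hcon
    push_neg at hcon
    obtain ⟨J, ⟨hJ0, hJn, hJv⟩, hminz⟩ := least_bad hcon
    obtain ⟨_, j₁, hj₁, hz₁, hv₁⟩ := h01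
    have hJeq : J = j₁ := by
      rcases lt_trichotomy J j₁ with hlt | h | hlt
      · exact absurd (hz₁ J hJ0 hlt) hJv
      · exact h
      · exact absurd (hminz j₁ hj₁ hlt) (fun hc => by rw [hc] at hv₁; simp at hv₁)
    have hJne0 : J ≠ 0 := by
      intro hc; rw [hc] at hJv; exact hJv ha0
    have hgJ : m J s - m J s'' = -1 := by
      have e1 : m J s'' = m J s' := hZ J (by omega) hJn
      have e2 : m J s - m J s' = -1 := by rw [hJeq]; exact hv₁
      linarith
    have hg0 : m 0 s - m 0 s'' = -1 := by linarith
    have hzmid : ∀ l : ℤ, 0 < l → l < J → m l s = m l s'' := fun l u w => by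
      have e1 : m l s = m l s' := hminz l (le_of_lt u) w
      have e2 : m l s'' = m l s' := hZ l u (by omega)
      rw [e1, ← e2]
    have halt := hm.2.2.2 s s'' hsne 0 J (by omega)
      (by intro hc; rw [hc] at hg0; simp at hg0)
      (by intro hc; rw [hc] at hgJ; simp at hgJ) hzmid
    linarith
  have hg0 : m 0 s - m 0 s'' = -1 := by linarith
  have hZ2 : ∀ j : ℤ, 0 < j → j < n → m j s = m j s'' := fun j u w => by
    rw [Z1 j (le_of_lt u) w, ← hZ j u w]
  refine ⟨(mem_P1_iff hm).2 ⟨hsne.symm, fun j u w => (hZ2 j u w).symm,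
      tailflip hm hn hsne hg0 hZ2⟩,
    (mem_P1_iff hm).2 ⟨h01.1, fun j u w => Z1 j (le_of_lt u) w,
      (ordJ_zero_iff_n Z1).2 h01⟩⟩

lemma precM_irrefl (hm : SimpleMatrix N n m) (i : ZMod N) : ¬ precM N m i i :=
  fun hc => ordJ_irrefl ((precM_iff_ordJ hm).1 hc)

lemma precM_asymm (hm : SimpleMatrix N n m) {i j : ZMod N} (h : precM N m i j)
    (h' : precM N m j i) : False :=
  ordJ_asymm ((precM_iff_ordJ hm).1 h) ((precM_iff_ordJ hm).1 h')

lemma precM_trans (hm : SimpleMatrix N n m) {i j k : ZMod N} (h : precM N m i j)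
    (h' : precM N m j k) : precM N m i k :=
  (precM_iff_ordJ hm).2 (ordJ_trans hm ((precM_iff_ordJ hm).1 h) ((precM_iff_ordJ hm).1 h'))

lemma precM_total (hm : SimpleMatrix N n m) (hn : 1 ≤ n) (i j : ZMod N) :
    precM N m i j ∨ i = j ∨ precM N m j i := by
  by_cases hij : i = j
  · exact Or.inr (Or.inl hij)
  · rcases ordJ_total hm hn hij 0 with h | h
    · exact Or.inl ((precM_iff_ordJ hm).2 h)
    · exact Or.inr (Or.inr ((precM_iff_ordJ hm).2 h))

lemma finset_max {α : Type} (r : α → α → Prop) (hirr : ∀ a, ¬ r a a)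
    (htr : ∀ a b c, r a b → r b c → r a c) (htot : ∀ a b, r a b ∨ a = b ∨ r b a) :
    ∀ s : Finset α, s.Nonempty → ∃ a ∈ s, ∀ b ∈ s, ¬ r a b := by
  classical
  intro s
  induction s using Finset.induction_on with
  | empty => rintro ⟨x, hx⟩; simp at hx
  | @insert a s ha ih =>
    intro _
    rcases s.eq_empty_or_nonempty with rfl | hs
    · refine ⟨a, by simp, ?_⟩
      intro b hb
      rcases Finset.mem_insert.1 hb with rfl | hb
      · exact hirr b
      · simp at hb
    · obtain ⟨M, hM, hmax⟩ := ih hs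
      rcases htot M a with h | h | h
      · refine ⟨a, Finset.mem_insert_self _ _, ?_⟩
        intro b hb
        rcases Finset.mem_insert.1 hb with rfl | hb
        · exact hirr b
        · exact fun hc => hmax b hb (htr _ _ _ h hc)
      · subst h
        refine ⟨M, Finset.mem_insert_self _ _, ?_⟩
        intro b hb
        rcases Finset.mem_insert.1 hb with rfl | hb
        · exact hirr b
        · exact hmax b hb
      · refine ⟨M, Finset.mem_insert_of_mem hM, ?_⟩
        intro b hb
        rcases Finset.mem_insert.1 hb with rfl | hb
        · exact fun hc => hirr _ (htr _ _ _ hc h)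
        · exact hmax b hb

lemma max_exists (hm : SimpleMatrix N n m) (hn : 1 ≤ n) :
    ∃ M : ZMod N, ∀ t, ¬ precM N m M t := by
  obtain ⟨M, _, hmax⟩ := finset_max (precM N m) (precM_irrefl hm)
    (fun a b c => precM_trans hm) (precM_total hm hn) Finset.univ
    (Finset.univ_nonempty)
  exact ⟨M, fun t => hmax t (Finset.mem_univ t)⟩

lemma min_exists (hm : SimpleMatrix N n m) (hn : 1 ≤ n) :
    ∃ m₀ : ZMod N, ∀ t, ¬ precM N m t m₀ := by
  obtain ⟨m₀, _, hmax⟩ := finset_max (fun a b => precM N m b a)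
    (precM_irrefl hm) (fun a b c h1 h2 => precM_trans hm h2 h1)
    (fun a b => by rcases precM_total hm hn a b with h | h | h
                   · exact Or.inr (Or.inr h)
                   · exact Or.inr (Or.inl h)
                   · exact Or.inl h) Finset.univ Finset.univ_nonempty
  exact ⟨m₀, fun t => hmax t (Finset.mem_univ t)⟩

variable {C0 : Equiv.Perm (ZMod N)}

/-- `C0` sends any maximal element to a minimal element. -/
lemma C0_max_min (hm : SimpleMatrix N n m) (hn : 1 ≤ n)
    (hC0 : ∀ s t : ZMod N, precM N m s t →
      precM N m s (C0 s) ∧ (C0 s = t ∨ precM N m (C0 s) t))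
    {M : ZMod N} (hM : ∀ t, ¬ precM N m M t) : ∀ u, ¬ precM N m u (C0 M) := by
  classical
  obtain ⟨m₀, hm₀⟩ := min_exists hm hn
  by_cases hMm : M = m₀
  · have hall : ∀ x : ZMod N, x = M := by
      intro x
      rcases precM_total hm hn x M with h | h | h
      · exact absurd h (by rw [hMm]; exact hm₀ x)
      · exact h
      · exact absurd h (hM x)
    intro u hu
    have h1 : C0 M = M := hall _
    rw [h1] at hu
    rw [hall u, hMm] at hu
    exact hm₀ m₀ hu
  · set A : Finset (ZMod N) := Finset.univ.erase M with hA
    set B : Finset (ZMod N) := Finset.univ.erase m₀ with hB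
    have himg : A.image (⇑C0) ⊆ B := by
      intro b hb
      obtain ⟨a, haA, rfl⟩ := Finset.mem_image.1 hb
      have haM : a ≠ M := (Finset.mem_erase.1 haA).1
      have haMp : precM N m a M := by
        rcases precM_total hm hn a M with h | h | h
        · exact h
        · exact absurd h haM
        · exact absurd h (hM a)
      have h1 : precM N m a (C0 a) := (hC0 a M haMp).1
      refine Finset.mem_erase.2 ⟨?_, Finset.mem_univ _⟩
      intro hc
      rw [hc] at h1
      exact hm₀ a h1
    have hcards : B.card ≤ (A.image (⇑C0)).card := by
      rw [Finset.card_image_of_injective _ C0.injective, hA, hB,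
        Finset.card_erase_of_mem (Finset.mem_univ _),
        Finset.card_erase_of_mem (Finset.mem_univ _)]
    have heq : A.image (⇑C0) = B := Finset.eq_of_subset_of_card_le himg hcards
    have hC0M : C0 M = m₀ := by
      by_contra hne
      have : C0 M ∈ B := Finset.mem_erase.2 ⟨hne, Finset.mem_univ _⟩
      rw [← heq] at this
      obtain ⟨a, haA, ha⟩ := Finset.mem_image.1 this
      exact (Finset.mem_erase.1 haA).1 (C0.injective ha)
    rw [hC0M]
    exact hm₀

lemma reach_all (hm : SimpleMatrix N n m) (hn : 1 ≤ n)
    (hC0 : ∀ s t : ZMod N, precM N m s t →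
      precM N m s (C0 s) ∧ (C0 s = t ∨ precM N m (C0 s) t)) :
    ∀ s t : ZMod N, ∃ k : ℕ, (C0 ^ k) s = t := by
  classical
  obtain ⟨m₀, hm₀⟩ := min_exists hm hn
  have hreach0 : ∀ t : ZMod N, ∃ k : ℕ, (C0 ^ k) m₀ = t := by
    suffices h : ∀ c : ℕ, ∀ t : ZMod N,
        (Finset.univ.filter (fun x => precM N m x t)).card = c →
        ∃ k : ℕ, (C0 ^ k) m₀ = t by
      exact fun t => h _ t rfl
    intro c
    induction c using Nat.strong_induction_on with
    | _ c ih =>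
      intro t hc
      by_cases ht : t = m₀
      · exact ⟨0, by simp [ht]⟩
      · have hm0t : precM N m m₀ t := by
          rcases precM_total hm hn m₀ t with h | h | h
          · exact h
          · exact absurd h.symm ht
          · exact absurd h (hm₀ t)
        obtain ⟨p, hpmem, hpmax⟩ := finset_max (precM N m) (precM_irrefl hm)
          (fun a b c => precM_trans hm) (precM_total hm hn)
          (Finset.univ.filter (fun x => precM N m x t))
          ⟨m₀, Finset.mem_filter.2 ⟨Finset.mem_univ _, hm0t⟩⟩
        have hpt : precM N m p t := (Finset.mem_filter.1 hpmem).2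
        have hC0p : C0 p = t := by
          rcases (hC0 p t hpt).2 with he | he
          · exact he
          · exact absurd ((hC0 p t hpt).1)
              (hpmax (C0 p) (Finset.mem_filter.2 ⟨Finset.mem_univ _, he⟩))
        have hsub : (Finset.univ.filter (fun x => precM N m x p)) ⊆
            (Finset.univ.filter (fun x => precM N m x t)) := by
          intro x hx
          exact Finset.mem_filter.2 ⟨Finset.mem_univ _,
            precM_trans hm (Finset.mem_filter.1 hx).2 hpt⟩
        have hlt : (Finset.univ.filter (fun x => precM N m x p)).card < c := by
          rw [← hc]
          refine Finset.card_lt_card ((Finset.ssubset_iff_of_subset hsub).2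
            ⟨p, Finset.mem_filter.2 ⟨Finset.mem_univ _, hpt⟩, ?_⟩)
          intro hcm
          exact precM_irrefl hm p (Finset.mem_filter.1 hcm).2
        obtain ⟨k, hk⟩ := ih _ hlt p rfl
        refine ⟨k + 1, ?_⟩
        rw [pow_succ']
        show C0 ((C0 ^ k) m₀) = t
        rw [hk, hC0p]
  have hback : ∀ s : ZMod N, ∃ k : ℕ, (C0 ^ k) s = m₀ := by
    intro s
    obtain ⟨ks, hks⟩ := hreach0 s
    obtain ⟨o', ho'⟩ : ∃ o', orderOf C0 = o' + 1 :=
      ⟨orderOf C0 - 1, by have := orderOf_pos C0; omega⟩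
    refine ⟨ks * o', ?_⟩
    rw [← hks, ← Equiv.Perm.mul_apply, ← pow_add]
    have he : ks * o' + ks = (o' + 1) * ks := by ring
    rw [he, pow_mul, ← ho', pow_orderOf_eq_one]
    simp
  intro s t
  obtain ⟨k1, hk1⟩ := hback s
  obtain ⟨k2, hk2⟩ := hreach0 t
  refine ⟨k2 + k1, ?_⟩
  rw [pow_add, Equiv.Perm.mul_apply, hk1, hk2]

lemma noloop (C0 : Equiv.Perm (ZMod N)) (R : ZMod N → ZMod N → Prop)
    (htr : ∀ a b c, R a b → R b c → R a c) (hirr : ∀ a, ¬ R a a)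
    (h : ∀ s, R s (C0 s)) : False := by
  have key : ∀ (k : ℕ) (s : ZMod N), R s ((C0 ^ (k+1)) s) := by
    intro k
    induction k with
    | zero => intro s; simpa using h s
    | succ k ih =>
      intro s
      have h2 := h ((C0 ^ (k+1)) s)
      have e : (C0 ^ (k+1+1)) s = C0 ((C0 ^ (k+1)) s) := by
        rw [pow_succ', Equiv.Perm.mul_apply]
      exact htr _ _ _ (ih s) (e ▸ h2)
  obtain ⟨o', ho'⟩ : ∃ o', orderOf C0 = o' + 1 :=
    ⟨orderOf C0 - 1, by have := orderOf_pos C0; omega⟩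
  have hx := key o' 0
  rw [← ho', pow_orderOf_eq_one] at hx
  exact hirr 0 (by simpa using hx)

lemma bet_up (hm : SimpleMatrix N n m) (hn : 1 ≤ n) {i v i' : ZMod N}
    (hZ : ∀ j : ℤ, 0 < j → j < n → m j i = m j i')
    (h1 : ordJ m 1 i v) (h2 : ordJ m 1 v i') :
    ordJ m (n:ℤ) i v ∧ ordJ m (n:ℤ) v i' := by
  obtain ⟨_, b1, b2⟩ := BPup_iter hm (a := 1) (n-1)
    (fun l u w => hZ l (by omega) (by omega)) h1 h2
  rw [show ((1:ℤ) + ((n-1:ℕ):ℤ)) = (n:ℤ) by omega] at b1 b2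
  exact ⟨b1, b2⟩

lemma bet_down (hm : SimpleMatrix N n m) (hn : 1 ≤ n) {i v i' : ZMod N}
    (hZ : ∀ j : ℤ, 0 < j → j < n → m j i = m j i')
    (h1 : ordJ m (n:ℤ) i v) (h2 : ordJ m (n:ℤ) v i') :
    ordJ m 1 i v ∧ ordJ m 1 v i' := by
  obtain ⟨_, b1, b2⟩ := BPdown_iter hm hn (b := (n:ℤ)) (n-1)
    (fun l u w => hZ l (by omega) (by omega)) h1 h2
  rw [show ((n:ℤ) - ((n-1:ℕ):ℤ)) = 1 by omega] at b1 b2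
  exact ⟨b1, b2⟩

lemma edge_down (hm : SimpleMatrix N n m) (hn : 1 ≤ n)
    (hC0 : ∀ s t : ZMod N, precM N m s t →
      precM N m s (C0 s) ∧ (C0 s = t ∨ precM N m (C0 s) t))
    {i i' : ZMod N} (hP : (i, i') ∈ P1M N n m) (hE : i' = C0 i) :
    i' - 1 = C0 (i - 1) := by
  obtain ⟨hne, hZ, hno⟩ := (mem_P1_iff hm).1 hP
  simp only at hne hZ hno
  have hprec : precM N m (i-1) (i'-1) := (precM_shift hm).2 hno
  rcases (hC0 (i-1) (i'-1) hprec).2 with he | he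
  · exact he.symm
  · exfalso
    set v : ZMod N := C0 (i-1) + 1 with hv
    have hv1 : v - 1 = C0 (i-1) := by ring
    have hbn1 : ordJ m (n:ℤ) i v :=
      (precM_shift hm).1 (by rw [hv1]; exact (hC0 (i-1) (i'-1) hprec).1)
    have hbn2 : ordJ m (n:ℤ) v i' := (precM_shift hm).1 (by rw [hv1]; exact he)
    obtain ⟨hb1', hb2'⟩ := bet_down hm hn hZ hbn1 hbn2
    have h1 : ordJ m 1 i i' := (ordJ_one_iff_n hn hZ).1 hno
    have h01 : ordJ m (0+1) i i' := by rwa [zero_add]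
    have hb01 : ordJ m (0+1) i v := by rwa [zero_add]
    have hb02 : ordJ m (0+1) v i' := by rwa [zero_add]
    rcases rng hm 0 i i' with hd | hd | hd
    · exact ordJ_asymm h01 (ordJ_flip hm hn hd)
    · rcases rng hm 0 i v with ha | ha | ha
      · exact ordJ_asymm hb01 (ordJ_flip hm hn ha)
      · rcases rng hm 0 v i' with hb | hb | hb
        · exact ordJ_asymm hb02 (ordJ_flip hm hn hb)
        · have hv0 : ordJ m 0 i v := (ordJ_succ_iff ha).1 hb01
          have hv0' : ordJ m 0 v i' := (ordJ_succ_iff hb).1 hb02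
          have hp1 : precM N m i v := (precM_iff_ordJ hm).2 hv0
          have hp2 : precM N m v i' := (precM_iff_ordJ hm).2 hv0'
          rcases (hC0 i v hp1).2 with hcv | hcv
          · rw [← hE] at hcv
            rw [← hcv] at hp2
            exact precM_irrefl hm i' hp2
          · rw [← hE] at hcv
            exact precM_asymm hm hp2 hcv
        · linarith
      · have hb : m 0 v - m 0 i' = -1 := by linarith
        exact ordJ_asymm hb02 (ordJ_flip hm hn hb)
    · have h0' : ordJ m 0 i' i := ordJ_of_d (by linarith)
      have hMax : ∀ t, ¬ precM N m i t := by
        intro t hti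
        have h2 := (hC0 i t hti).1
        rw [← hE] at h2
        exact ordJ_asymm ((precM_iff_ordJ hm).1 h2) h0'
      have hminC := C0_max_min hm hn hC0 hMax
      rcases rng hm 0 i v with ha | ha | ha
      · exact ordJ_asymm hb01 (ordJ_flip hm hn ha)
      · have hv0 : ordJ m 0 i v := (ordJ_succ_iff ha).1 hb01
        exact hMax v ((precM_iff_ordJ hm).2 hv0)
      · have hb : m 0 v = m 0 i' := by linarith
        have hv0' : ordJ m 0 v i' := (ordJ_succ_iff hb).1 hb02
        have h2 := (precM_iff_ordJ hm).2 hv0'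
        rw [hE] at h2
        exact hminC v h2

lemma edge_up (hm : SimpleMatrix N n m) (hn : 1 ≤ n)
    (hC0 : ∀ s t : ZMod N, precM N m s t →
      precM N m s (C0 s) ∧ (C0 s = t ∨ precM N m (C0 s) t))
    {i i' : ZMod N} (hP : (i, i') ∈ P1M N n m) (hE : i' - 1 = C0 (i - 1)) :
    i' = C0 i := by
  obtain ⟨hne, hZ, hno⟩ := (mem_P1_iff hm).1 hP
  simp only at hne hZ hno
  have nbv : ∀ v : ZMod N, ordJ m (n:ℤ) i v → ordJ m (n:ℤ) v i' → False := by
    intro v hv1 hv2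
    have hp1 : precM N m (i-1) (v-1) := (precM_shift hm).2 hv1
    have hp2 : precM N m (v-1) (i'-1) := (precM_shift hm).2 hv2
    rcases (hC0 (i-1) (v-1) hp1).2 with hcv | hcv
    · rw [← hE] at hcv
      rw [← hcv] at hp2
      exact precM_irrefl hm _ hp2
    · rw [← hE] at hcv
      exact precM_asymm hm hp2 hcv
  have h1 : ordJ m 1 i i' := (ordJ_one_iff_n hn hZ).1 hno
  have h01 : ordJ m (0+1) i i' := by rwa [zero_add]
  rcases rng hm 0 i i' with hd | hd | hd
  · exact absurd (ordJ_flip hm hn hd) (fun hc => ordJ_asymm h01 hc)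
  · have h0 : ordJ m 0 i i' := (ordJ_succ_iff hd).1 h01
    have hp : precM N m i i' := (precM_iff_ordJ hm).2 h0
    rcases (hC0 i i' hp).2 with he | he
    · exact he.symm
    · exfalso
      set v := C0 i with hv
      have hp1 : precM N m i v := (hC0 i i' hp).1
      have hv0 : ordJ m 0 i v := (precM_iff_ordJ hm).1 hp1
      have hv0' : ordJ m 0 v i' := (precM_iff_ordJ hm).1 he
      rcases rng hm 0 i v with ha | ha | ha
      · exact ordJ_asymm hv0' (ordJ_of_d (i := i') (i' := v) (by linarith))
      · have hb : m 0 v = m 0 i' := by linarith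
        have hb1 : ordJ m (0+1) i v := (ordJ_succ_iff ha).2 hv0
        have hb2 : ordJ m (0+1) v i' := (ordJ_succ_iff hb).2 hv0'
        rw [zero_add] at hb1 hb2
        obtain ⟨bn1, bn2⟩ := bet_up hm hn hZ hb1 hb2
        exact nbv v bn1 bn2
      · exact ordJ_asymm hv0 (ordJ_of_d (i := v) (i' := i) (by linarith))
  · have hMax : ∀ t, ¬ precM N m i t := by
      intro w hw
      have hw0 : ordJ m 0 i w := (precM_iff_ordJ hm).1 hw
      rcases rng hm 0 i w with ha | ha | ha
      · rcases rng hm 0 w i' with hb | hb | hb <;> linarith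
      · have hbf : m 0 i' - m 0 w = -1 := by linarith
        have hb2 := ordJ_flip hm hn hbf
        have hb1 : ordJ m (0+1) i w := (ordJ_succ_iff ha).2 hw0
        rw [zero_add] at hb1 hb2
        obtain ⟨bn1, bn2⟩ := bet_up hm hn hZ hb1 hb2
        exact nbv w bn1 bn2
      · exact ordJ_asymm hw0 (ordJ_of_d (i := w) (i' := i) (by linarith))
    have hMin : ∀ t, ¬ precM N m t i' := by
      intro w hw
      have hw0 : ordJ m 0 w i' := (precM_iff_ordJ hm).1 hw
      rcases rng hm 0 w i' with hb | hb | hb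
      · rcases rng hm 0 i w with ha | ha | ha <;> linarith
      · have haf : m 0 w - m 0 i = -1 := by linarith
        have hb1 := ordJ_flip hm hn haf
        have hb2 : ordJ m (0+1) w i' := (ordJ_succ_iff hb).2 hw0
        rw [zero_add] at hb1 hb2
        obtain ⟨bn1, bn2⟩ := bet_up hm hn hZ hb1 hb2
        exact nbv w bn1 bn2
      · exact ordJ_asymm hw0 (ordJ_of_d (i := i') (i' := w) (by linarith))
    have hminC := C0_max_min hm hn hC0 hMax
    rcases precM_total hm hn i' (C0 i) with h | h | h
    · exact absurd h (hminC i')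
    · exact h
    · exact absurd h (hMin (C0 i))

lemma P1_comp (hm : SimpleMatrix N n m) {s t u : ZMod N}
    (h1 : (s, t) ∈ P1M N n m) (h2 : (t, u) ∈ P1M N n m) : (s, u) ∈ P1M N n m := by
  obtain ⟨hne1, hZ1, ho1⟩ := (mem_P1_iff hm).1 h1
  obtain ⟨hne2, hZ2, ho2⟩ := (mem_P1_iff hm).1 h2
  simp only at hne1 hZ1 ho1 hne2 hZ2 ho2
  have ho : ordJ m (n:ℤ) s u := ordJ_trans hm ho1 ho2
  exact (mem_P1_iff hm).2 ⟨ho.1, fun j a b => (hZ1 j a b).trans (hZ2 j a b), ho⟩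

lemma P2_comp (hm : SimpleMatrix N n m) {s t u : ZMod N}
    (h1 : (s, t) ∈ P2M N n m) (h2 : (t, u) ∈ P2M N n m) : (s, u) ∈ P2M N n m := by
  rw [mem_P2_iff] at h1 h2 ⊢
  exact P1_comp hm h1 h2

lemma P1_step (hm : SimpleMatrix N n m) (hn : 1 ≤ n)
    (hC0 : ∀ s t : ZMod N, precM N m s t →
      precM N m s (C0 s) ∧ (C0 s = t ∨ precM N m (C0 s) t))
    {s t : ZMod N} (hP : (s, t) ∈ P1M N n m) (hne : C0 s ≠ t) :
    (s, C0 s) ∈ P1M N n m ∧ (C0 s, t) ∈ P1M N n m := by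
  have hst : s ≠ t := ((mem_P1_iff hm).1 hP).1
  rcases precM_total hm hn s t with h | h | h
  · -- s ≺ t
    have h1 := (hC0 s t h).1
    rcases (hC0 s t h).2 with he | he
    · exact absurd he hne
    · have o1 := (precM_iff_ordJ hm).1 h1
      have o2 := (precM_iff_ordJ hm).1 he
      exact conv1 hm hn o1 o2 hP
  · exact absurd h hst
  · -- t ≺ s
    by_cases hmax : ∃ w, precM N m s w
    · obtain ⟨w, hw⟩ := hmax
      have h1 := (hC0 s w hw).1
      have o1 := (precM_iff_ordJ hm).1 h
      have o2 := (precM_iff_ordJ hm).1 h1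
      exact conv3 hm hn o1 o2 hP
    · push_neg at hmax
      have hminC := C0_max_min hm hn hC0 hmax
      -- C0 s is minimal; t ≠ C0 s so C0 s ≺ t
      have hct : precM N m (C0 s) t := by
        rcases precM_total hm hn (C0 s) t with h' | h' | h'
        · exact h'
        · exact absurd h'.symm hne.symm
        · exact absurd h' (hminC t)
      have o1 := (precM_iff_ordJ hm).1 hct
      have o2 := (precM_iff_ordJ hm).1 h
      have hres := conv4 hm hn o1 o2 hP
      exact ⟨hres.1, hres.2⟩

lemma P2_step (hm : SimpleMatrix N n m) (hn : 1 ≤ n)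
    (hC0 : ∀ s t : ZMod N, precM N m s t →
      precM N m s (C0 s) ∧ (C0 s = t ∨ precM N m (C0 s) t))
    {s t : ZMod N} (hP : (s, t) ∈ P2M N n m) (hne : C0 s ≠ t) :
    (s, C0 s) ∈ P2M N n m ∧ (C0 s, t) ∈ P2M N n m := by
  have h : precM N m s t := (precM_iff_ordJ hm).2 ((mem_P2_iff' hm).1 hP).2.2
  have h1 := (hC0 s t h).1
  rcases (hC0 s t h).2 with he | he
  · exact absurd he hne
  · exact conv2 hm hn ((precM_iff_ordJ hm).1 h1) ((precM_iff_ordJ hm).1 he) hP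

lemma pow_succ_apply (C0 : Equiv.Perm (ZMod N)) (k : ℕ) (s : ZMod N) :
    (C0 ^ (k+1)) s = (C0 ^ k) (C0 s) := by
  rw [pow_succ, Equiv.Perm.mul_apply]

lemma chainEdges (X : Set (ZMod N × ZMod N))
    (hXne : ∀ p ∈ X, p.1 ≠ p.2)
    (hstep : ∀ s t : ZMod N, (s, t) ∈ X → C0 s ≠ t →
      (s, C0 s) ∈ X ∧ (C0 s, t) ∈ X) :
    ∀ (k : ℕ) (s : ZMod N), (s, (C0 ^ k) s) ∈ X →
      (∀ j : ℕ, 0 < j → j < k → (C0 ^ j) s ≠ (C0 ^ k) s) →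
      ∀ j : ℕ, j < k → ((C0 ^ j) s, (C0 ^ (j+1)) s) ∈ X := by
  intro k
  induction k with
  | zero =>
    intro s hX _ j hj
    exact absurd hj (by omega)
  | succ k ih =>
    intro s hX hmin j hj
    by_cases hk0 : k = 0
    · subst hk0
      have hj0 : j = 0 := by omega
      subst hj0
      simpa using hX
    · -- k ≥ 1; C0 s ≠ (C0^(k+1)) s by minimality at j = 1
      have hCne : C0 s ≠ (C0 ^ (k+1)) s := by
        have := hmin 1 (by omega) (by omega)
        simpa using this
      obtain ⟨hXe, hXr⟩ := hstep s ((C0 ^ (k+1)) s) hX hCne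
      have hXr' : ((C0 s), (C0 ^ k) (C0 s)) ∈ X := by
        rwa [← pow_succ_apply]
      have hmin' : ∀ j : ℕ, 0 < j → j < k → (C0 ^ j) (C0 s) ≠ (C0 ^ k) (C0 s) := by
        intro j hj1 hj2
        rw [← pow_succ_apply, ← pow_succ_apply]
        exact hmin (j+1) (by omega) (by omega)
      rcases Nat.eq_zero_or_pos j with hj0 | hj0
      · subst hj0
        simpa using hXe
      · obtain ⟨j', rfl⟩ : ∃ j', j = j' + 1 := ⟨j - 1, by omega⟩
        have hres := ih (C0 s) hXr' hmin' j' (by omega)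
        rwa [← pow_succ_apply, ← pow_succ_apply] at hres

lemma ppath_eq (X : Set (ZMod N × ZMod N))
    (hXne : ∀ p ∈ X, p.1 ≠ p.2)
    (hstep : ∀ s t : ZMod N, (s, t) ∈ X → C0 s ≠ t →
      (s, C0 s) ∈ X ∧ (C0 s, t) ∈ X)
    (hcomp : ∀ {s t u : ZMod N}, (s, t) ∈ X → (t, u) ∈ X → (s, u) ∈ X)
    (hreach : ∀ s t : ZMod N, ∃ k : ℕ, (C0 ^ k) s = t) :
    Ppath C0 (X ∩ graphOf C0) = X := by
  classical
  ext ⟨s, t⟩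
  constructor
  · rintro ⟨k, hk1, hk2, hedges⟩
    simp only at hk2
    -- compose edges
    have key : ∀ k' : ℕ, 1 ≤ k' → k' ≤ k → (s, (C0 ^ k') s) ∈ X := by
      intro k'
      induction k' with
      | zero => intro h; exact absurd h (by omega)
      | succ k' ih =>
        intro _ hle
        rcases Nat.eq_zero_or_pos k' with rfl | hk'
        · have := (hedges 0 (by omega)).1
          simpa using this
        · have h1 := ih (by omega) (by omega)
          have h2 := (hedges k' (by omega)).1
          exact hcomp h1 h2
    rw [hk2]
    exact key k hk1 (le_refl _)
  · intro hX
    have hst : s ≠ t := hXne (s, t) hX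
    obtain ⟨k0, hk0⟩ := hreach s t
    have hk0ne : k0 ≠ 0 := by
      intro hc; rw [hc] at hk0; simp at hk0; exact hst hk0
    -- minimal positive k with C0^k s = t
    have hex : ∃ k : ℕ, (C0 ^ (k+1)) s = t := ⟨k0 - 1, by
      have : k0 - 1 + 1 = k0 := by omega
      rw [this]; exact hk0⟩
    set kk := Nat.find hex with hkk
    have hkkv : (C0 ^ (kk+1)) s = t := Nat.find_spec hex
    have hkmin : ∀ j : ℕ, 0 < j → j < kk + 1 → (C0 ^ j) s ≠ (C0 ^ (kk+1)) s := by
      intro j hj1 hj2 hc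
      have : (C0 ^ ((j-1)+1)) s = t := by
        have e : j - 1 + 1 = j := by omega
        rw [e, hc, hkkv]
      have hle : kk ≤ j - 1 := Nat.find_le this
      omega
    have hedges := chainEdges X hXne hstep (kk+1) s (by rwa [hkkv]) hkmin
    refine ⟨kk + 1, by omega, by simp only; rw [hkkv], ?_⟩
    intro j hj
    refine ⟨hedges j hj, ?_⟩
    show (C0 ^ (j+1)) s = C0 ((C0 ^ j) s)
    rw [pow_succ', Equiv.Perm.mul_apply]

lemma Cm_pow : ∀ (k : ℕ) (s : ZMod N), ((Cm N) ^ k) s = s - (k : ZMod N) := by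
  intro k
  induction k with
  | zero => intro s; simp
  | succ k ih =>
    intro s
    rw [pow_succ_apply]
    have : (Cm N) s = s - 1 := rfl
    rw [this, ih]
    push_cast
    ring

lemma Cm_reach (s t : ZMod N) : ∃ k : ℕ, ((Cm N) ^ k) s = t := by
  refine ⟨(s - t).val, ?_⟩
  rw [Cm_pow, ZMod.natCast_val, ZMod.cast_id]
  ring

end AuxBD


/-- Lemma `BD-lem`: a matrix `m` satisfying the simplicity conditions
gives rise, via the order `≺` and the sets `P1`, `P2`, to an associative BD-structure on
the completely ordered set `(ℤ/N, ≺)` with `α0 ∉ Γ2`, whose associated pair `(P_1, P_2)`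
is `(P1, P2)`. -/
theorem stmt15 (N : ℕ) [NeZero N] (n : ℕ) (hn : 1 ≤ n)
    (m : ℤ → ZMod N → ℤ) (hm : SimpleMatrix N n m) :
    -- (1) `≺` is a strict total order on `ℤ/N`
    ((∀ i : ZMod N, ¬ precM N m i i)
      ∧ (∀ i j : ZMod N, precM N m i j → ¬ precM N m j i)
      ∧ (∀ i j k : ZMod N, precM N m i j → precM N m j k → precM N m i k)
      ∧ (∀ i j : ZMod N, precM N m i j ∨ i = j ∨ precM N m j i))
    -- (2) elements of `P2` increase, and `P1`, `P2` satisfy the convexity conditions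
    ∧ ((∀ p ∈ P2M N n m, precM N m p.1 p.2)
      ∧ (∀ s s' s'' : ZMod N, precM N m s s' → precM N m s' s'' →
          ((s, s'') ∈ P1M N n m → (s, s') ∈ P1M N n m ∧ (s', s'') ∈ P1M N n m)
          ∧ ((s, s'') ∈ P2M N n m → (s, s') ∈ P2M N n m ∧ (s', s'') ∈ P2M N n m)
          ∧ ((s', s) ∈ P1M N n m → (s', s'') ∈ P1M N n m ∧ (s'', s) ∈ P1M N n m)
          ∧ ((s'', s') ∈ P1M N n m → (s'', s) ∈ P1M N n m ∧ (s, s') ∈ P1M N n m)))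
    -- (3) with `C0` the successor cyclic permutation of `(ℤ/N, ≺)`, the sets
    -- `Γ1 = P1 ∩ Γ_{C0}`, `Γ2 = P2 ∩ Γ_{C0}` define an associative BD-structure with
    -- `α0 ∉ Γ2` whose associated pair `(P_1, P_2)` equals `(P1, P2)`
    ∧ (∀ C0 : Equiv.Perm (ZMod N),
        (∀ s t : ZMod N, precM N m s t →
          precM N m s (C0 s) ∧ (C0 s = t ∨ precM N m (C0 s) t)) →
        (∀ s t : ZMod N, ∃ k : ℕ, (C0 ^ k) s = t)
        ∧ (∀ s t : ZMod N, ∃ k : ℕ, ((Cm N) ^ k) s = t)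
        ∧ (P1M N n m ∩ graphOf C0) ⊂ graphOf C0
        ∧ (P2M N n m ∩ graphOf C0) ⊂ graphOf C0
        ∧ CCimage (Cm N) (P1M N n m ∩ graphOf C0) = P2M N n m ∩ graphOf C0
        ∧ (∀ smax smin : ZMod N, (∀ t, ¬ precM N m smax t) → (∀ t, ¬ precM N m t smin) →
            (smax, smin) ∉ P2M N n m ∩ graphOf C0)
        ∧ Ppath C0 (P1M N n m ∩ graphOf C0) = P1M N n m
        ∧ Ppath C0 (P2M N n m ∩ graphOf C0) = P2M N n m) := by
  have p2prec : ∀ p ∈ P2M N n m, precM N m p.1 p.2 :=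
    fun p hp => (precM_iff_ordJ hm).2 ((mem_P2_iff' hm).1 hp).2.2
  refine ⟨⟨fun i => precM_irrefl hm i, fun i j h h' => precM_asymm hm h h',
    fun i j k h h' => precM_trans hm h h', precM_total hm hn⟩,
    ⟨p2prec, ?_⟩, ?_⟩
  · intro s s' s'' h1 h2
    have o1 := (precM_iff_ordJ hm).1 h1
    have o2 := (precM_iff_ordJ hm).1 h2
    exact ⟨fun hp => conv1 hm hn o1 o2 hp, fun hp => conv2 hm hn o1 o2 hp,
      fun hp => conv3 hm hn o1 o2 hp, fun hp => conv4 hm hn o1 o2 hp⟩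
  · intro C0 hC0
    have hreach := reach_all hm hn hC0
    refine ⟨hreach, fun s t => Cm_reach s t, ?_, ?_, ?_, ?_, ?_, ?_⟩
    · -- Γ1 ⊊ Γ
      rw [Set.ssubset_iff_subset_ne]
      refine ⟨Set.inter_subset_right, ?_⟩
      intro heq
      have hall : ∀ s : ZMod N, precM N m (s - 1) (C0 s - 1) := by
        intro s
        have hG : (s, C0 s) ∈ graphOf C0 := rfl
        have : (s, C0 s) ∈ P1M N n m ∩ graphOf C0 := by rw [heq]; exact hG
        exact this.1.2.2
      exact absurd hall (fun h => noloop C0 (fun a b => precM N m (a-1) (b-1))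
        (fun a b c h1 h2 => precM_trans hm h1 h2)
        (fun a => precM_irrefl hm (a-1)) h)
    · -- Γ2 ⊊ Γ
      rw [Set.ssubset_iff_subset_ne]
      refine ⟨Set.inter_subset_right, ?_⟩
      intro heq
      have hall : ∀ s : ZMod N, precM N m s (C0 s) := by
        intro s
        have hG : (s, C0 s) ∈ graphOf C0 := rfl
        have hmem : (s, C0 s) ∈ P2M N n m ∩ graphOf C0 := by rw [heq]; exact hG
        exact p2prec _ hmem.1
      exact noloop C0 (precM N m) (fun a b c h1 h2 => precM_trans hm h1 h2)
        (fun a => precM_irrefl hm a) hall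
    · -- CCimage equality
      ext ⟨s, t⟩
      constructor
      · rintro ⟨⟨i, i'⟩, ⟨hP1, hG⟩, heq⟩
        have hG' : i' = C0 i := hG
        have hs : i - 1 = s := congrArg Prod.fst heq
        have ht : i' - 1 = t := congrArg Prod.snd heq
        constructor
        · rw [mem_P2_iff]
          have : ((s + 1 : ZMod N), (t + 1 : ZMod N)) = (i, i') := by
            rw [← hs, ← ht]; simp
          rw [this]
          exact hP1
        · show t = C0 s
          rw [← hs, ← ht]
          exact edge_down hm hn hC0 hP1 hG'
      · rintro ⟨hP2, hG⟩
        have hG' : t = C0 s := hG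
        have hP1 : ((s + 1 : ZMod N), (t + 1 : ZMod N)) ∈ P1M N n m :=
          (mem_P2_iff).1 hP2
        refine ⟨(s + 1, t + 1), ⟨hP1, ?_⟩, ?_⟩
        · show t + 1 = C0 (s + 1)
          exact edge_up hm hn hC0 hP1 (by simpa using hG')
        · show ((Cm N) (s+1), (Cm N) (t+1)) = (s, t)
          have e : ∀ x : ZMod N, (Cm N) (x + 1) = x := fun x => by
            show x + 1 - 1 = x; ring
          rw [e, e]
    · -- α0 ∉ Γ2
      intro smax smin hmax hmin hmem
      exact hmax smin (p2prec _ hmem.1)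
    · -- Ppath Γ1 = P1
      exact ppath_eq (P1M N n m) (fun p hp => hp.1)
        (fun s t hP hne => P1_step hm hn hC0 hP hne)
        (fun h1 h2 => P1_comp hm h1 h2) hreach
    · -- Ppath Γ2 = P2
      exact ppath_eq (P2M N n m) (fun p hp => ((mem_P2_iff' hm).1 hp).1)
        (fun s t hP hne => P2_step hm hn hC0 hP hne)
        (fun h1 h2 => P2_comp hm h1 h2) hreach
end
end

section
/- Let Ω ⊆ ℂ and let r : Ω → A⊗A satisfy r^{12}(v)·r^{13}(v+v') − r^{23}(v')·r^{12}(v) + r^{13}(v+v')·r^{23}(v') = 0 for all v, v' ∈ Ω with v+v' ∈ Ω, and r^{21}(−v) = −r(v) whenever v, −v ∈ Ω. Define r̂(u,v) = u^{-1}·(1⊗1) + r(v) for u ∈ ℂ ∖ {0} and v ∈ Ω. Then r̂ is a unitary solution of the associative Yang–Baxter equation: r̂^{12}(−u',v)·r̂^{13}(u+u',v+v') − r̂^{23}(u+u',v')·r̂^{12}(u,v) + r̂^{13}(u,v+v')·r̂^{23}(u',v') = 0 for all u, u' ∈ ℂ with u, u', u+u' ≠ 0 and all v, v' ∈ Ω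 with v+v' ∈ Ω, and r̂^{21}(−u,−v) = −r̂(u,v) for all u ≠ 0 and v ∈ Ω with −v ∈ Ω. -/
open scoped TensorProduct
set_option maxHeartbeats 1000000
noncomputable section

variable (S : Type) [Fintype S] [DecidableEq S]

/-!
The scalar function `u ↦ u⁻¹` solves the associative Yang–Baxter equation, and since `1 ⊗ 1`
is central, adding a scalar solution `φ(u) • 1` to the `u`-independent solution `r(v)` only
creates the cross terms `(φ(-u') + φ(u')) • r¹³(v + v')`, which vanish because `φ` is odd.
-/

theorem AlgHom.map_smul_one_add {R A B : Type*} [CommSemiring R] [Semiring A] [Algebra R A]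
    [Semiring B] [Algebra R B] (f : A →ₐ[R] B) (c : R) (x : A) :
    f (c • 1 + x) = c • 1 + f x := by
  rw [map_add, map_smul, map_one]

theorem inv_neg_mul_inv_add_sub_inv_add_mul_inv_add_inv_mul_inv {K : Type*} [Field K] {u u' : K}
    (hu : u ≠ 0) (hu' : u' ≠ 0) (huu' : u + u' ≠ 0) :
    (-u')⁻¹ * (u + u')⁻¹ - (u + u')⁻¹ * u⁻¹ + u⁻¹ * u'⁻¹ = 0 := by
  field_simp
  ring

theorem smul_one_add_mul_sub_mul_add_mul_eq_zero {R B : Type*} [CommRing R] [Ring B] [Algebra R B]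
    {a b d f : R} {x y z : B} (hxyz : x * y - z * x + y * z = 0)
    (habdf : a * b - b * d + d * f = 0) (haf : a + f = 0) :
    (a • 1 + x) * (b • 1 + y) - (b • 1 + z) * (d • 1 + x) + (d • 1 + y) * (f • 1 + z) = 0 := by
  have expand : (a • 1 + x) * (b • 1 + y) - (b • 1 + z) * (d • 1 + x) + (d • 1 + y) * (f • 1 + z)
      = (a * b - b * d + d * f) • (1 : B) + (a + f) • y + (x * y - z * x + y * z) := by
    simp only [add_mul, mul_add, smul_mul_assoc, mul_smul_comm, one_mul, mul_one]
    module
  rw [expand, hxyz, habdf, haf, zero_smul, zero_smul, add_zero, add_zero]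

/-- if `r(v)` is a unitary solution of the `u`-independent AYBE on `Ω`,
then `r̂(u,v) = u⁻¹·(1⊗1) + r(v)` is a unitary solution of the AYBE. -/
theorem stmt18 (N : ℕ) (Ω : Set ℂ)
    (r : ℂ → TT (Fin N))
    (hAYBE : ∀ v ∈ Ω, ∀ v' ∈ Ω, v + v' ∈ Ω →
      leg12 (Fin N) (r v) * leg13 (Fin N) (r (v + v'))
        - leg23 (Fin N) (r v') * leg12 (Fin N) (r v)
        + leg13 (Fin N) (r (v + v')) * leg23 (Fin N) (r v') = 0)
    (hunit : ∀ v ∈ Ω, -v ∈ Ω → flip21 (Fin N) (r (-v)) = - r v)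
    (rhat : ℂ → ℂ → TT (Fin N))
    (hrhat : ∀ u v : ℂ, rhat u v = u⁻¹ • (1 : TT (Fin N)) + r v) :
    (∀ u u' : ℂ, u ≠ 0 → u' ≠ 0 → u + u' ≠ 0 →
      ∀ v ∈ Ω, ∀ v' ∈ Ω, v + v' ∈ Ω →
      leg12 (Fin N) (rhat (-u') v) * leg13 (Fin N) (rhat (u + u') (v + v'))
        - leg23 (Fin N) (rhat (u + u') v') * leg12 (Fin N) (rhat u v)
        + leg13 (Fin N) (rhat u (v + v')) * leg23 (Fin N) (rhat u' v') = 0)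
    ∧ (∀ u : ℂ, u ≠ 0 → ∀ v ∈ Ω, -v ∈ Ω →
        flip21 (Fin N) (rhat (-u) (-v)) = - rhat u v) := by
  refine ⟨fun u u' hu hu' huu' v hv v' hv' hvv' => ?_, fun u _ v hv hv' => ?_⟩
  · simp only [hrhat, AlgHom.map_smul_one_add]
    exact smul_one_add_mul_sub_mul_add_mul_eq_zero (B := TTT (Fin N)) (hAYBE v hv v' hv' hvv')
      (inv_neg_mul_inv_add_sub_inv_add_mul_inv_add_inv_mul_inv hu hu' huu')
      (by rw [inv_neg, neg_add_cancel])
  · rw [hrhat, hrhat, AlgHom.map_smul_one_add, hunit v hv hv', inv_neg]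
    module
end
end
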